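/- arXiv:2205.15186 — 2 statements merged into one kernel-verified Lean document; each statement's English description precedes it below -/
import Mathlib

section
/- Let n ≥ 1 and let (a_{ij})_{i,j ∈ [n]} be a family of n² jointly independent real-valued random variables on a probability space, each nonnegative, square-integrable, with E[a_{ij}] = μ₁ and E[a_{ij}²] = μ₂ for all i,j. Let A be the random n×n matrix with entries a_{ij} and let perm_{Bethe,2}(A)² := 2^{-n²} · Σ_s perm(A↑s). Then E[perm_{Bethe,2}(A)²] = n! · Σ_{σ ∈ S_n} μ₂^{fix(σ)} · (μ₁²)^{n − fix(σ)} · 2^{-c(σ)}. -/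
open scoped BigOperators
open MeasureTheory ProbabilityTheory

/-- The permanent of a square real matrix: `perm B = Σ_σ ∏_i B(i, σ(i))`. -/
noncomputable def matPerm {ι : Type*} [Fintype ι] [DecidableEq ι] (B : Matrix ι ι ℝ) : ℝ :=
  ∑ σ : Equiv.Perm ι, ∏ i, B i (σ i)

/-- The double-cover lift `A↑s` of an `n×n` matrix `A` along a family `s` of permutations
of `Fin M` indexed by pairs `(i,j)`. -/
def coverLift {n M : ℕ} (A : Matrix (Fin n) (Fin n) ℝ)
    (s : Fin n → Fin n → Equiv.Perm (Fin M)) :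
    Matrix (Fin n × Fin M) (Fin n × Fin M) ℝ :=
  fun p q => if s p.1 q.1 p.2 = q.2 then A p.1 q.1 else 0

/-- `fixCount σ` is the number of fixed points of the permutation `σ`. -/
def fixCount {n : ℕ} (σ : Equiv.Perm (Fin n)) : ℕ :=
  (Finset.univ.filter fun i => σ i = i).card


set_option linter.unusedSectionVars false
set_option linter.unnecessarySimpa false
set_option maxHeartbeats 1600000

theorem Equiv.Perm.apply_inv_self {α : Type*} (f : Equiv.Perm α) (x : α) : f (f⁻¹ x) = x :=
  Equiv.apply_symm_apply f x

theorem Equiv.Perm.inv_apply_self {α : Type*} (f : Equiv.Perm α) (x : α) : f⁻¹ (f x) = x :=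
  Equiv.symm_apply_apply f x

namespace BetheAux

open Equiv Equiv.Perm Finset MeasureTheory ProbabilityTheory

section Cyc
variable {α : Type*} [Fintype α] [DecidableEq α]

lemma invariant_apply_inv {ρ : Perm α} {f : α → Bool} (hf : ∀ x, f (ρ x) = f x) (x : α) :
    f (ρ⁻¹ x) = f x := by
  conv_rhs => rw [← Equiv.Perm.apply_inv_self ρ x, hf]

/-- The piecewise permutation equal to `ρ⁻¹` where `f` is true and `ρ` elsewhere. -/
def pwPerm (ρ : Perm α) (f : α → Bool) (hf : ∀ x, f (ρ x) = f x) : Perm α where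
  toFun x := if f x then ρ⁻¹ x else ρ x
  invFun x := if f x then ρ x else ρ⁻¹ x
  left_inv x := by
    by_cases hx : f x = true
    · simp [hx, show ∀ y, f (ρ.symm y) = f y from invariant_apply_inv hf, Equiv.Perm.apply_inv_self]
    · simp only [Bool.not_eq_true] at hx
      simp [hx, hf x, Equiv.Perm.inv_apply_self]
  right_inv x := by
    by_cases hx : f x = true
    · simp [hx, hf x, Equiv.Perm.inv_apply_self]
    · simp only [Bool.not_eq_true] at hx
      simp [hx, show ∀ y, f (ρ.symm y) = f y from invariant_apply_inv hf, Equiv.Perm.apply_inv_self]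

lemma pwPerm_apply (ρ : Perm α) (f : α → Bool) (hf : ∀ x, f (ρ x) = f x) (x : α) :
    pwPerm ρ f hf x = if f x then ρ⁻¹ x else ρ x := rfl

lemma pwPerm_inv_invariant {ρ : Perm α} {f : α → Bool} (hf : ∀ x, f (ρ x) = f x) :
    ∀ x, f (ρ⁻¹ x) = f x := invariant_apply_inv hf

lemma pwPerm_invariant {ρ : Perm α} {f : α → Bool} (hf : ∀ x, f (ρ x) = f x) :
    ∀ x, f (pwPerm ρ f hf x) = f x := by
  intro x
  rw [pwPerm_apply]
  by_cases hx : f x = true <;> simp_all [show ∀ y, f (ρ.symm y) = f y from invariant_apply_inv hf, hf]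

lemma pwPerm_inv (ρ : Perm α) (f : α → Bool) (hf : ∀ x, f (ρ x) = f x) :
    (pwPerm ρ f hf)⁻¹ = pwPerm ρ⁻¹ f (invariant_apply_inv hf) := by
  ext x
  simp only [pwPerm]
  rfl

lemma pwPerm_pw (ρ : Perm α) (f : α → Bool) (hf : ∀ x, f (ρ x) = f x) :
    pwPerm (pwPerm ρ f hf) f (pwPerm_invariant hf) = ρ := by
  ext x
  rw [pwPerm_apply, pwPerm_inv, pwPerm_apply, pwPerm_apply]
  by_cases hx : f x = true <;> simp [hx]

lemma pwPerm_pow (ρ : Perm α) (f : α → Bool) (hf : ∀ x, f (ρ x) = f x) (k : ℕ) (x : α) :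
    (pwPerm ρ f hf ^ k) x = if f x then (ρ⁻¹ ^ k) x else (ρ ^ k) x := by
  induction k generalizing x with
  | zero => simp
  | succ k ih =>
    have h1 : (pwPerm ρ f hf ^ (k+1)) x = (pwPerm ρ f hf ^ k) (pwPerm ρ f hf x) := by
      rw [pow_succ]; rfl
    rw [h1, ih, pwPerm_apply]
    by_cases hx : f x = true
    · simp only [hx, if_pos, invariant_apply_inv hf, if_true]
      rw [show (ρ⁻¹ ^ (k+1)) x = (ρ⁻¹ ^ k) (ρ⁻¹ x) by rw [pow_succ]; rfl]
    · simp only [Bool.not_eq_true] at hx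
      simp only [hx, if_neg, hf x, Bool.false_eq_true, if_false]
      rw [show (ρ ^ (k+1)) x = (ρ ^ k) (ρ x) by rw [pow_succ]; rfl]

lemma pwPerm_sameCycle_imp (ρ : Perm α) (f : α → Bool) (hf : ∀ x, f (ρ x) = f x) (x y : α)
    (h : SameCycle (pwPerm ρ f hf) x y) : SameCycle ρ x y := by
  obtain ⟨i, hi⟩ := h
  rcases i with k | k
  · rw [Int.ofNat_eq_coe, zpow_natCast, pwPerm_pow] at hi
    by_cases hx : f x = true
    · rw [if_pos hx] at hi
      exact ⟨-(k : ℤ), by rw [zpow_neg, ← inv_zpow, zpow_natCast]; exact hi⟩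
    · simp only [Bool.not_eq_true] at hx
      rw [hx] at hi; simp only [Bool.false_eq_true, if_false] at hi
      exact ⟨(k : ℤ), by rw [zpow_natCast]; exact hi⟩
  · rw [zpow_negSucc, ← inv_pow, pwPerm_inv, pwPerm_pow] at hi
    by_cases hx : f x = true
    · rw [if_pos hx, inv_inv] at hi
      exact ⟨((k+1 : ℕ) : ℤ), by rw [zpow_natCast]; exact hi⟩
    · simp only [Bool.not_eq_true] at hx
      rw [hx] at hi; simp only [Bool.false_eq_true, if_false] at hi
      exact ⟨-((k+1 : ℕ) : ℤ), by rw [zpow_neg, ← inv_zpow, zpow_natCast]; exact hi⟩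

lemma pwPerm_sameCycle (ρ : Perm α) (f : α → Bool) (hf : ∀ x, f (ρ x) = f x) (x y : α) :
    SameCycle (pwPerm ρ f hf) x y ↔ SameCycle ρ x y := by
  constructor
  · exact pwPerm_sameCycle_imp ρ f hf x y
  · intro h
    have := pwPerm_sameCycle_imp (pwPerm ρ f hf) f (pwPerm_invariant hf) x y
    rw [pwPerm_pw] at this
    exact this h

/-- The setoid of the same-cycle relation. -/
def QS (ρ : Perm α) : Setoid α :=
  ⟨SameCycle ρ, ⟨SameCycle.refl ρ, SameCycle.symm, SameCycle.trans⟩⟩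

instance QSdec (ρ : Perm α) : DecidableRel (QS ρ).r := fun x y =>
  inferInstanceAs (Decidable (SameCycle ρ x y))

noncomputable instance QSfin (ρ : Perm α) : Fintype (Quotient (QS ρ)) :=
  @Quotient.fintype α _ (QS ρ) (QSdec ρ)

/-- Number of same-cycle classes = number of nontrivial cycles + number of fixed points. -/
lemma card_QS (ρ : Perm α) :
    Fintype.card (Quotient (QS ρ)) =
      ρ.cycleType.card + (univ.filter fun x => ρ x = x).card := by
  classical
  have key : Quotient (QS ρ) ≃
      ({c : Perm α // c ∈ ρ.cycleFactorsFinset} ⊕ {x : α // ρ x = x}) := by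
    refine Equiv.ofBijective (Quotient.lift (fun x : α =>
      if h : ρ x = x then Sum.inr ⟨x, h⟩ else
        Sum.inl ⟨ρ.cycleOf x, cycleOf_mem_cycleFactorsFinset_iff.mpr (mem_support.mpr h)⟩) ?_) ⟨?_, ?_⟩
    · intro x y hxy
      by_cases hx : ρ x = x
      · have : y = x := by
          obtain ⟨i, hi⟩ := hxy
          rw [zpow_apply_eq_self_of_apply_eq_self hx] at hi
          exact hi.symm
        subst this; rfl
      · by_cases hy : ρ y = y
        · exfalso
          obtain ⟨i, hi⟩ := hxy.symm
          rw [zpow_apply_eq_self_of_apply_eq_self hy] at hi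
          exact hx (hi ▸ hy)
        · simp only [dif_neg hx, dif_neg hy]
          congr 1
          exact Subtype.ext (SameCycle.cycleOf_eq hxy)
    · intro q1 q2
      induction q1 using Quotient.ind with | _ x =>
      induction q2 using Quotient.ind with | _ y =>
      simp only [Quotient.lift_mk]
      intro h
      by_cases hx : ρ x = x <;> by_cases hy : ρ y = y <;>
        simp only [hx, hy, dif_pos, dif_neg, not_false_iff] at h
      · apply Quotient.sound
        obtain rfl : x = y := by simpa using h
        exact SameCycle.refl ρ x
      · exact absurd h (by simp)
      · exact absurd h (by simp)
      · apply Quotient.sound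
        have hcyc : ρ.cycleOf x = ρ.cycleOf y := by
          have := congrArg (fun z => match z with | Sum.inl c => c.1 | Sum.inr _ => 1) h
          simpa using this
        show SameCycle ρ x y
        have hy' : y ∈ (ρ.cycleOf x).support := by
          rw [hcyc, mem_support_cycleOf_iff]
          exact ⟨SameCycle.refl ρ y, mem_support.mpr hy⟩
        exact ((mem_support_cycleOf_iff).mp hy').1
    · rintro (⟨c, hc⟩ | ⟨x, hx⟩)
      · obtain ⟨hcyc, hsup⟩ := mem_cycleFactorsFinset_iff.mp hc
        obtain ⟨x, hxs⟩ := hcyc.nonempty_support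
        have hρx : ρ x ≠ x := by
          rw [← hsup x hxs]; exact mem_support.mp hxs
        refine ⟨⟦x⟧, ?_⟩
        simp only [Quotient.lift_mk, dif_neg hρx]
        congr 1
        exact Subtype.ext (cycle_is_cycleOf hxs hc).symm
      · exact ⟨⟦x⟧, by simp [hx]⟩
  rw [Fintype.card_congr key, Fintype.card_sum]
  congr 1
  · rw [Fintype.card_coe, cycleType_def, Multiset.card_map]
    rfl
  · rw [Fintype.card_subtype]


lemma invariant_pow {ρ : Perm α} {f : α → Bool} (hf : ∀ x, f (ρ x) = f x) (k : ℕ) (x : α) :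
    f ((ρ ^ k) x) = f x := by
  induction k generalizing x with
  | zero => simp
  | succ k ih =>
    rw [show (ρ ^ (k+1)) x = (ρ ^ k) (ρ x) by rw [pow_succ]; rfl, ih, hf]

lemma invariant_zpow {ρ : Perm α} {f : α → Bool} (hf : ∀ x, f (ρ x) = f x) (i : ℤ) (x : α) :
    f ((ρ ^ i) x) = f x := by
  rcases i with k | k
  · rw [Int.ofNat_eq_coe, zpow_natCast, invariant_pow hf]
  · rw [zpow_negSucc, ← inv_pow, invariant_pow (invariant_apply_inv hf)]

lemma card_invariant_bool (ρ : Perm α) :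
    (univ.filter fun f : α → Bool => ∀ x, f (ρ x) = f x).card =
      2 ^ Fintype.card (Quotient (QS ρ)) := by
  classical
  rw [← Fintype.card_subtype]
  have e : {f : α → Bool // ∀ x, f (ρ x) = f x} ≃ (Quotient (QS ρ) → Bool) := by
    refine ⟨fun f => Quotient.lift f.1 (fun x y hxy => ?_),
      fun g => ⟨fun x => g ⟦x⟧, fun x => congrArg g (Quotient.sound ?_)⟩, ?_, ?_⟩
    · obtain ⟨i, hi⟩ := hxy
      rw [← hi, invariant_zpow f.2]
    · exact ⟨-1, by simp⟩
    · intro f; ext x; rfl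
    · intro g; funext q; induction q using Quotient.ind with | _ x => rfl
  rw [Fintype.card_congr e, Fintype.card_fun, Fintype.card_bool]

lemma pwPerm_fixed_iff (ρ : Perm α) (f : α → Bool) (hf : ∀ x, f (ρ x) = f x) (x : α) :
    pwPerm ρ f hf x = x ↔ ρ x = x := by
  rw [pwPerm_apply]
  by_cases hx : f x = true
  · rw [if_pos hx]
    constructor
    · intro h; conv_lhs => rw [← h]
      rw [Equiv.Perm.apply_inv_self]
    · intro h; rw [show ρ⁻¹ x = ρ⁻¹ (ρ x) by rw [h], Equiv.Perm.inv_apply_self]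
  · simp only [Bool.not_eq_true] at hx
    rw [hx]; simp

lemma pwPerm_counts (ρ : Perm α) (f : α → Bool) (hf : ∀ x, f (ρ x) = f x) :
    (pwPerm ρ f hf).cycleType.card = ρ.cycleType.card ∧
      (univ.filter fun x => pwPerm ρ f hf x = x).card =
        (univ.filter fun x => ρ x = x).card := by
  have hfix : (univ.filter fun x => pwPerm ρ f hf x = x) =
      (univ.filter fun x => ρ x = x) := by
    apply Finset.filter_congr
    intro x _
    simp [pwPerm_fixed_iff ρ f hf x]
  have hset : QS (pwPerm ρ f hf) = QS ρ := by
    apply Setoid.ext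
    intro x y
    exact pwPerm_sameCycle ρ f hf x y
  have hq : Fintype.card (Quotient (QS (pwPerm ρ f hf))) =
      Fintype.card (Quotient (QS ρ)) := by
    have : Quotient (QS (pwPerm ρ f hf)) = Quotient (QS ρ) := congrArg Quotient hset
    exact Fintype.card_congr (Equiv.cast this)
  have h1 := card_QS (pwPerm ρ f hf)
  have h2 := card_QS ρ
  rw [h1, h2, hfix] at hq
  exact ⟨Nat.add_right_cancel hq, hfix ▸ rfl⟩


end Cyc

section Prob
variable {Ω : Type*} [MeasurableSpace Ω] {μ : Measure Ω} [IsProbabilityMeasure μ]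
lemma integral_prod_indep {ι : Type*} [Fintype ι]
    (X : ι → Ω → ℝ) (hmeas : ∀ i, Measurable (X i)) (hint : ∀ i, Integrable (X i) μ)
    (hX : iIndepFun X μ) (s : Finset ι) :
    Integrable (fun ω => ∏ i ∈ s, X i ω) μ ∧
      ∫ ω, ∏ i ∈ s, X i ω ∂μ = ∏ i ∈ s, ∫ ω, X i ω ∂μ := by
  classical
  induction s using Finset.induction with
  | empty => simp [integrable_const]
  | insert _ _ hi =>
    rename_i i s ih
    have hindep : IndepFun (∏ j ∈ s, X j) (X i) μ :=
      hX.indepFun_finsetProd_of_notMem hmeas hi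
    have hprodfun : (∏ j ∈ s, X j) = fun ω => ∏ j ∈ s, X j ω := by
      funext ω; rw [Finset.prod_apply]
    have hint1 : Integrable (∏ j ∈ s, X j) μ := by rw [hprodfun]; exact ih.1
    have hmul : Integrable ((∏ j ∈ s, X j) * X i) μ :=
      hindep.integrable_mul hint1 (hint i)
    have heq : ∫ ω, (∏ j ∈ s, X j) ω * X i ω ∂μ =
        (∫ ω, (∏ j ∈ s, X j) ω ∂μ) * ∫ ω, X i ω ∂μ :=
      hindep.integral_mul_eq_mul_integral hint1.aestronglyMeasurable (hint i).aestronglyMeasurable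
    constructor
    · have : (fun ω => ∏ j ∈ insert i s, X j ω) = (∏ j ∈ s, X j) * X i := by
        funext ω
        simp only [Pi.mul_apply, Finset.prod_apply]
        rw [Finset.prod_insert hi, mul_comm]
      rw [this]; exact hmul
    · rw [Finset.prod_insert hi]
      calc ∫ ω, ∏ j ∈ insert i s, X j ω ∂μ
          = ∫ ω, (∏ j ∈ s, X j) ω * X i ω ∂μ := by
            congr 1; funext ω
            rw [Finset.prod_insert hi, hprodfun, mul_comm]
        _ = (∫ ω, (∏ j ∈ s, X j) ω ∂μ) * ∫ ω, X i ω ∂μ := heq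
        _ = (∏ j ∈ s, ∫ ω, X j ω ∂μ) * ∫ ω, X i ω ∂μ := by
            rw [hprodfun]; rw [ih.2]
        _ = (∫ ω, X i ω ∂μ) * ∏ j ∈ s, ∫ ω, X j ω ∂μ := mul_comm _ _


end Prob

section Comb
variable {n : ℕ}

/-- the number of cells of row `i` that `τ` sends to column `j` -/
def eDeg (τ : Perm (Fin n × Fin 2)) (i j : Fin n) : ℕ :=
  (univ.filter fun k : Fin 2 => (τ (i,k)).1 = j).card

lemma fin2cases : ∀ l : Fin 2, l = 0 ∨ l = 1 := by decide

lemma finsetFin2 : ∀ S : Finset (Fin 2), S = ∅ ∨ S = {0} ∨ S = {1} ∨ S = univ := by decide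

lemma permFin2sum (g : Perm (Fin 2) → ℝ) :
    ∑ σ : Perm (Fin 2), g σ = g 1 + g (Equiv.swap 0 1) := by
  rw [show (univ : Finset (Perm (Fin 2))) = {1, Equiv.swap 0 1} from by decide]
  rw [Finset.sum_insert (by decide), Finset.sum_singleton]

lemma sum_covers (A : Matrix (Fin n) (Fin n) ℝ) :
    ∑ s : Fin n → Fin n → Equiv.Perm (Fin 2), matPerm (coverLift A s)
      = ∑ τ : Perm (Fin n × Fin 2), ∏ i, ∏ j,
          (if eDeg τ i j = 0 then (2:ℝ) else A i j ^ eDeg τ i j) := by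
  have h1 : ∀ s, matPerm (coverLift A s) =
      ∑ τ : Perm (Fin n × Fin 2), ∏ p : Fin n × Fin 2,
        (if s p.1 (τ p).1 p.2 = (τ p).2 then A p.1 (τ p).1 else 0) := by
    intro s; rfl
  simp only [h1]
  rw [Finset.sum_comm]
  refine Finset.sum_congr rfl (fun τ _ => ?_)
  -- reorganize the product over cells
  have h2 : ∀ s : Fin n → Fin n → Perm (Fin 2),
      (∏ p : Fin n × Fin 2, if s p.1 (τ p).1 p.2 = (τ p).2 then A p.1 (τ p).1 else 0)
      = ∏ i, ∏ j, ∏ k ∈ (univ.filter fun k : Fin 2 => (τ (i,k)).1 = j),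
          (if s i j k = (τ (i,k)).2 then A i j else 0) := by
    intro s
    rw [Fintype.prod_prod_type]
    refine Finset.prod_congr rfl (fun i _ => ?_)
    rw [← Finset.prod_fiberwise_of_maps_to (g := fun k : Fin 2 => (τ (i,k)).1)
      (fun k _ => Finset.mem_univ _) (fun k => if s i ((τ (i,k)).1) k = (τ (i,k)).2
        then A i ((τ (i,k)).1) else 0)]
    refine Finset.prod_congr rfl (fun j _ => ?_)
    refine Finset.prod_congr rfl (fun k hk => ?_)
    rw [(Finset.mem_filter.mp hk).2]
  simp only [h2]
  -- swap sum over s with products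
  have h3 : (∑ s : Fin n → Fin n → Perm (Fin 2), ∏ i, ∏ j,
      ∏ k ∈ (univ.filter fun k : Fin 2 => (τ (i,k)).1 = j),
        (if s i j k = (τ (i,k)).2 then A i j else 0))
      = ∏ i, ∑ v : Fin n → Perm (Fin 2), ∏ j,
          ∏ k ∈ (univ.filter fun k : Fin 2 => (τ (i,k)).1 = j),
            (if v j k = (τ (i,k)).2 then A i j else 0) := by
    rw [Finset.prod_univ_sum]
    rw [Fintype.piFinset_univ]
  rw [h3]
  refine Finset.prod_congr rfl (fun i _ => ?_)
  have h4 : (∑ v : Fin n → Perm (Fin 2), ∏ j,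
      ∏ k ∈ (univ.filter fun k : Fin 2 => (τ (i,k)).1 = j),
        (if v j k = (τ (i,k)).2 then A i j else 0))
      = ∏ j, ∑ σ : Perm (Fin 2),
          ∏ k ∈ (univ.filter fun k : Fin 2 => (τ (i,k)).1 = j),
            (if σ k = (τ (i,k)).2 then A i j else 0) := by
    rw [Finset.prod_univ_sum]
    rw [Fintype.piFinset_univ]
  rw [h4]
  refine Finset.prod_congr rfl (fun j _ => ?_)
  -- per-(i,j) evaluation
  rcases finsetFin2 (univ.filter fun k : Fin 2 => (τ (i,k)).1 = j) with hS | hS | hS | hS <;>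
    rw [eDeg, hS]
  · simp only [Finset.prod_empty, Finset.card_empty]
    rw [permFin2sum (fun _ => 1)]
    norm_num
  · rw [permFin2sum]
    simp only [Finset.prod_singleton, Finset.card_singleton]
    rcases fin2cases ((τ (i,(0:Fin 2))).2) with hl | hl <;>
      simp [hl, Equiv.swap_apply_left, Equiv.swap_apply_right, Equiv.Perm.one_apply]
  · rw [permFin2sum]
    simp only [Finset.prod_singleton, Finset.card_singleton]
    rcases fin2cases ((τ (i,(1:Fin 2))).2) with hl | hl <;>
      simp [hl, Equiv.swap_apply_left, Equiv.swap_apply_right, Equiv.Perm.one_apply]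
  · -- both cells of row i map to column j
    have h0 : (τ (i,(0:Fin 2))).1 = j := by
      have : (0:Fin 2) ∈ univ.filter fun k : Fin 2 => (τ (i,k)).1 = j := by
        rw [hS]; exact mem_univ _
      exact (Finset.mem_filter.mp this).2
    have h1' : (τ (i,(1:Fin 2))).1 = j := by
      have : (1:Fin 2) ∈ univ.filter fun k : Fin 2 => (τ (i,k)).1 = j := by
        rw [hS]; exact mem_univ _
      exact (Finset.mem_filter.mp this).2
    have hne : (τ (i,(0:Fin 2))).2 ≠ (τ (i,(1:Fin 2))).2 := by
      intro h
      have : τ (i,(0:Fin 2)) = τ (i,(1:Fin 2)) := Prod.ext (h0.trans h1'.symm) h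
      have := τ.injective this
      simp at this
    rw [permFin2sum]
    have hcard : (univ : Finset (Fin 2)).card = 2 := by decide
    rw [hcard]
    have hprod : ∀ σ : Perm (Fin 2),
        (∏ k : Fin 2, if σ k = (τ (i,k)).2 then A i j else 0)
        = (if σ 0 = (τ (i,(0:Fin 2))).2 then A i j else 0) *
          (if σ 1 = (τ (i,(1:Fin 2))).2 then A i j else 0) := by
      intro σ; rw [Fin.prod_univ_two]
    rw [hprod, hprod]
    rcases fin2cases ((τ (i,(0:Fin 2))).2) with hl | hl <;>
      rcases fin2cases ((τ (i,(1:Fin 2))).2) with hl' | hl' <;>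
        rw [hl, hl'] at hne ⊢ <;>
      simp [Equiv.swap_apply_left, Equiv.swap_apply_right, Equiv.Perm.one_apply, sq] at hne ⊢


def flip2 : Fin 2 → Fin 2 := fun k => if k = 0 then 1 else 0

lemma flip2_ne : ∀ k, flip2 k ≠ k := by decide
lemma flip2_flip2 : ∀ k, flip2 (flip2 k) = k := by decide
lemma eq_flip2_of_ne : ∀ {k l : Fin 2}, l ≠ k → l = flip2 k := by decide

variable {n : ℕ}

/-- `t` selects one cell in each row; `Valid τ t` says it also selects exactly one cell
in each `τ`-column. -/
def Valid (τ : Perm (Fin n × Fin 2)) (t : Fin n → Fin 2) : Prop :=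
  ∀ j : Fin n, ((τ.symm (j,0)).2 = t (τ.symm (j,0)).1) ↔ ¬ ((τ.symm (j,1)).2 = t (τ.symm (j,1)).1)

instance (τ : Perm (Fin n × Fin 2)) : DecidablePred (Valid τ) := fun t => by
  unfold Valid; infer_instance

lemma col_mem (τ : Perm (Fin n × Fin 2)) {p : Fin n × Fin 2} {j : Fin n} (hj : (τ p).1 = j) :
    p = τ.symm (j,0) ∨ p = τ.symm (j,1) := by
  rcases fin2cases (τ p).2 with h | h
  · left
    rw [← hj, ← h]
    exact (Equiv.symm_apply_apply τ p).symm
  · right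
    rw [← hj, ← h]
    exact (Equiv.symm_apply_apply τ p).symm

lemma valid_pair_iff {τ : Perm (Fin n × Fin 2)} {t : Fin n → Fin 2} (h : Valid τ t)
    {p q : Fin n × Fin 2} {j : Fin n} (hp : (τ p).1 = j) (hq : (τ q).1 = j) (hpq : p ≠ q) :
    (p.2 = t p.1) ↔ ¬ (q.2 = t q.1) := by
  rcases col_mem τ hp with h0 | h0 <;> rcases col_mem τ hq with h1 | h1
  · exact absurd (h0.trans h1.symm) hpq
  · rw [h0, h1]; exact h j
  · rw [h0, h1]
    have := h j
    by_cases hb : ((τ.symm (j,0)).2 = t (τ.symm (j,0)).1) <;> tauto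
  · exact absurd (h0.trans h1.symm) hpq

lemma same_sel_eq {τ : Perm (Fin n × Fin 2)} {t : Fin n → Fin 2} (h : Valid τ t)
    {p q : Fin n × Fin 2} (hcol : (τ p).1 = (τ q).1)
    (hsel : (p.2 = t p.1) ↔ (q.2 = t q.1)) : p = q := by
  by_contra hpq
  have := valid_pair_iff h hcol rfl hpq
  by_cases hb : (q.2 = t q.1) <;> tauto

/-- the row-to-column map given by the selected cells -/
def sigmaMap (τ : Perm (Fin n × Fin 2)) (t : Fin n → Fin 2) : Fin n → Fin n :=
  fun i => (τ (i, t i)).1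

/-- the row-to-column map given by the unselected cells -/
def sigmaMap' (τ : Perm (Fin n × Fin 2)) (t : Fin n → Fin 2) : Fin n → Fin n :=
  fun i => (τ (i, flip2 (t i))).1

lemma sigmaMap_inj {τ : Perm (Fin n × Fin 2)} {t : Fin n → Fin 2} (h : Valid τ t) :
    Function.Injective (sigmaMap τ t) := by
  intro i i' heq
  have : ((i, t i) : Fin n × Fin 2) = (i', t i') := by
    apply same_sel_eq h heq
    simp
  exact congrArg Prod.fst this

lemma sigmaMap'_inj {τ : Perm (Fin n × Fin 2)} {t : Fin n → Fin 2} (h : Valid τ t) :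
    Function.Injective (sigmaMap' τ t) := by
  intro i i' heq
  have : ((i, flip2 (t i)) : Fin n × Fin 2) = (i', flip2 (t i')) := by
    apply same_sel_eq h heq
    simp only []
    constructor
    · intro hc; exact absurd hc (flip2_ne _)
    · intro hc; exact absurd hc (flip2_ne _)
  exact congrArg Prod.fst this

/-- the permutation `σ₁` determined by a valid selection -/
noncomputable def perm1 (τ : Perm (Fin n × Fin 2)) (t : Fin n → Fin 2) (h : Valid τ t) :
    Perm (Fin n) :=
  Equiv.ofBijective _ ((Finite.injective_iff_bijective).mp (sigmaMap_inj h))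

/-- the permutation `σ₂` determined by a valid selection -/
noncomputable def perm2 (τ : Perm (Fin n × Fin 2)) (t : Fin n → Fin 2) (h : Valid τ t) :
    Perm (Fin n) :=
  Equiv.ofBijective _ ((Finite.injective_iff_bijective).mp (sigmaMap'_inj h))

lemma perm1_apply (τ : Perm (Fin n × Fin 2)) (t : Fin n → Fin 2) (h : Valid τ t) (i : Fin n) :
    perm1 τ t h i = (τ (i, t i)).1 := rfl

lemma perm2_apply (τ : Perm (Fin n × Fin 2)) (t : Fin n → Fin 2) (h : Valid τ t) (i : Fin n) :
    perm2 τ t h i = (τ (i, flip2 (t i))).1 := rfl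

/-- `ρ = σ₁⁻¹ σ₂` -/
noncomputable def rhoP (τ : Perm (Fin n × Fin 2)) (t : Fin n → Fin 2) (h : Valid τ t) :
    Perm (Fin n) :=
  (perm1 τ t h)⁻¹ * perm2 τ t h

lemma rhoP_apply (τ : Perm (Fin n × Fin 2)) (t : Fin n → Fin 2) (h : Valid τ t) (x : Fin n) :
    rhoP τ t h x = (perm1 τ t h)⁻¹ (perm2 τ t h x) := rfl

lemma rhoP_inv_apply (τ : Perm (Fin n × Fin 2)) (t : Fin n → Fin 2) (h : Valid τ t) (x : Fin n) :
    (rhoP τ t h)⁻¹ x = (perm2 τ t h)⁻¹ (perm1 τ t h x) := by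
  rw [rhoP, mul_inv_rev, inv_inv]
  rfl


lemma exists_valid (τ : Perm (Fin n × Fin 2)) : ∃ t : Fin n → Fin 2, Valid τ t := by
  classical
  -- Hall's theorem gives an injective choice of columns
  set rowset : Fin n → Finset (Fin n) :=
    fun i => insert (τ (i,0)).1 {(τ (i,1)).1} with hrowset
  have hall : ∀ s : Finset (Fin n), s.card ≤ (s.biUnion rowset).card := by
    intro s
    set u : Finset (Fin n × Fin 2) := s ×ˢ (univ : Finset (Fin 2)) with hu
    have himg : u.image (fun p => (τ p).1) ⊆ s.biUnion rowset := by
      intro j hj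
      obtain ⟨p, hp, hpj⟩ := Finset.mem_image.mp hj
      obtain ⟨hp1, _⟩ := Finset.mem_product.mp hp
      refine Finset.mem_biUnion.mpr ⟨p.1, hp1, ?_⟩
      rw [hrowset]
      rcases fin2cases p.2 with h | h
      · apply Finset.mem_insert.mpr; left
        rw [← hpj]; congr 1; rw [← h]
      · apply Finset.mem_insert.mpr; right
        rw [Finset.mem_singleton, ← hpj]; congr 1; rw [← h]
    have hfib : ∀ j ∈ u.image (fun p => (τ p).1),
        (u.filter fun p => (τ p).1 = j).card ≤ 2 := by
      intro j _
      have hsub : (u.filter fun p => (τ p).1 = j) ⊆ insert (τ.symm (j,0)) {τ.symm (j,1)} := by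
        intro p hp
        have := (Finset.mem_filter.mp hp).2
        rcases col_mem τ this with h | h
        · exact Finset.mem_insert.mpr (Or.inl h)
        · exact Finset.mem_insert.mpr (Or.inr (Finset.mem_singleton.mpr h))
      calc (u.filter fun p => (τ p).1 = j).card
          ≤ (insert (τ.symm (j,0)) ({τ.symm (j,1)} : Finset _)).card := Finset.card_le_card hsub
        _ ≤ 2 := by
            apply le_trans (Finset.card_insert_le _ _)
            simp
    have h1 : u.card ≤ 2 * (u.image fun p => (τ p).1).card :=
      Finset.card_le_mul_card_image u 2 hfib
    have h2 : (u.image fun p => (τ p).1).card ≤ (s.biUnion rowset).card :=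
      Finset.card_le_card himg
    have h3 : u.card = s.card * 2 := by
      rw [hu, Finset.card_product]
      simp
    omega
  obtain ⟨f, hfinj, hf⟩ := (Finset.all_card_le_biUnion_card_iff_exists_injective rowset).mp hall
  set t₀ : Fin n → Fin 2 := fun i => if (τ (i,0)).1 = f i then 0 else 1 with ht₀
  have hkey : ∀ i, (τ (i, t₀ i)).1 = f i := by
    intro i
    rw [ht₀]
    by_cases hc : (τ (i,0)).1 = f i
    · simpa [hc] using hc
    · simp only [hc, if_false]
      have := hf i
      rw [hrowset] at this
      rcases Finset.mem_insert.mp this with h | h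
      · exact absurd h.symm hc
      · exact (Finset.mem_singleton.mp h).symm
  refine ⟨t₀, ?_⟩
  intro j
  have hfsurj : Function.Surjective f := (Finite.injective_iff_surjective).mp hfinj
  obtain ⟨i₀, hi₀⟩ := hfsurj j
  set c : Fin n × Fin 2 := (i₀, t₀ i₀) with hc
  have hcj : (τ c).1 = j := by rw [hc, hkey, hi₀]
  have huniq : ∀ p : Fin n × Fin 2, (τ p).1 = j → p.2 = t₀ p.1 → p = c := by
    intro p hpj hps
    have hp' : p = (p.1, t₀ p.1) := by
      rw [← hps]
    have : f p.1 = j := by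
      rw [← hkey p.1, ← hp', hpj]
    have : p.1 = i₀ := hfinj (this.trans hi₀.symm)
    rw [hp', this, hc]
  have hB0 : (τ (τ.symm (j,0))).1 = j := by rw [Equiv.apply_symm_apply]
  have hB1 : (τ (τ.symm (j,1))).1 = j := by rw [Equiv.apply_symm_apply]
  have hBne : τ.symm (j,(0:Fin 2)) ≠ τ.symm (j,1) := by
    intro h
    have := τ.symm.injective h
    simp at this
  rcases col_mem τ hcj with hcB | hcB
  · -- c is the 0-cell: selected
    constructor
    · intro _ hsel1
      have := huniq _ hB1 hsel1
      rw [this, ← hcB] at hBne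
      exact hBne rfl
    · intro _
      rw [← hcB, hc]
  · constructor
    · intro hsel0
      have := huniq _ hB0 hsel0
      rw [this, ← hcB] at hBne
      exact absurd rfl hBne
    · intro hns
      exfalso
      apply hns
      rw [← hcB, hc]

/-- dite-protected weight `2^{-(c(ρ)+fix(ρ))}` of a valid selection -/
noncomputable def weight (τ : Perm (Fin n × Fin 2)) (t : Fin n → Fin 2) : ℝ :=
  if h : Valid τ t then
    ((2:ℝ) ^ ((rhoP τ t h).cycleType.card + fixCount (rhoP τ t h)))⁻¹ else 0

lemma Bne (τ : Perm (Fin n × Fin 2)) (j : Fin n) : τ.symm (j,(0:Fin 2)) ≠ τ.symm (j,1) := by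
  intro h
  have := τ.symm.injective h
  simp at this

lemma pair_cover {τ : Perm (Fin n × Fin 2)} {j : Fin n} {p q : Fin n × Fin 2}
    (hp : (τ p).1 = j) (hq : (τ q).1 = j) (hpq : p ≠ q) :
    ∀ {r : Fin n × Fin 2}, (τ r).1 = j → r = p ∨ r = q := by
  intro r hr
  rcases col_mem τ hp with h0 | h0 <;> rcases col_mem τ hq with h1 | h1
  · exact absurd (h0.trans h1.symm) hpq
  · rcases col_mem τ hr with h2 | h2
    · left; rw [h2, h0]
    · right; rw [h2, h1]
  · rcases col_mem τ hr with h2 | h2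
    · right; rw [h2, h1]
    · left; rw [h2, h0]
  · exact absurd (h0.trans h1.symm) hpq

section Base
variable {τ : Perm (Fin n × Fin 2)} {t₀ : Fin n → Fin 2} (h₀ : Valid τ t₀)

lemma cell_p_col (j : Fin n) : (τ (((perm1 τ t₀ h₀)⁻¹ j), t₀ ((perm1 τ t₀ h₀)⁻¹ j))).1 = j := by
  have := perm1_apply τ t₀ h₀ ((perm1 τ t₀ h₀)⁻¹ j)
  rw [← this]
  exact Equiv.Perm.apply_inv_self _ _

lemma cell_q_col (j : Fin n) :
    (τ (((perm2 τ t₀ h₀)⁻¹ j), flip2 (t₀ ((perm2 τ t₀ h₀)⁻¹ j)))).1 = j := by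
  have := perm2_apply τ t₀ h₀ ((perm2 τ t₀ h₀)⁻¹ j)
  rw [← this]
  exact Equiv.Perm.apply_inv_self _ _

lemma cell_pq_ne (j : Fin n) :
    ((((perm1 τ t₀ h₀)⁻¹ j), t₀ ((perm1 τ t₀ h₀)⁻¹ j)) : Fin n × Fin 2)
      ≠ (((perm2 τ t₀ h₀)⁻¹ j), flip2 (t₀ ((perm2 τ t₀ h₀)⁻¹ j))) := by
  intro h
  have h1 : (perm1 τ t₀ h₀)⁻¹ j = (perm2 τ t₀ h₀)⁻¹ j := congrArg Prod.fst h
  have h2 := congrArg Prod.snd h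
  simp only [h1] at h2
  exact flip2_ne _ h2.symm

/-- two valid selections differ row-wise in a `ρ₀`-invariant fashion -/
lemma rows_rel {t : Fin n → Fin 2} (h : Valid τ t) (j : Fin n) :
    (t ((perm1 τ t₀ h₀)⁻¹ j) = t₀ ((perm1 τ t₀ h₀)⁻¹ j)) ↔
      (t ((perm2 τ t₀ h₀)⁻¹ j) = t₀ ((perm2 τ t₀ h₀)⁻¹ j)) := by
  set r1 := (perm1 τ t₀ h₀)⁻¹ j with hr1
  set r2 := (perm2 τ t₀ h₀)⁻¹ j with hr2
  have hiff := valid_pair_iff h (cell_p_col h₀ j) (cell_q_col h₀ j) (cell_pq_ne h₀ j)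
  simp only at hiff
  constructor
  · intro he
    by_contra hne
    have hsel : t₀ r1 = t r1 := he.symm
    have := hiff.mp hsel
    exact this (eq_flip2_of_ne (fun hc => hne hc)).symm
  · intro he
    by_contra hne
    have : ¬ (flip2 (t₀ r2) = t r2) := by
      intro hc
      rw [← hc] at he
      exact flip2_ne _ he
    have := hiff.mpr this
    exact hne this.symm

lemma toF_invariant {t : Fin n → Fin 2} (h : Valid τ t) :
    ∀ x, (fun i => if t i = t₀ i then false else true) (rhoP τ t₀ h₀ x)
      = (fun i => if t i = t₀ i then false else true) x := by
  intro x
  simp only []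
  have hx : x = (perm2 τ t₀ h₀)⁻¹ (perm2 τ t₀ h₀ x) := (Equiv.Perm.inv_apply_self _ _).symm
  have hrel := rows_rel h₀ h (perm2 τ t₀ h₀ x)
  rw [← hx] at hrel
  have hρ : rhoP τ t₀ h₀ x = (perm1 τ t₀ h₀)⁻¹ (perm2 τ t₀ h₀ x) := rfl
  rw [hρ]
  by_cases hc : t ((perm1 τ t₀ h₀)⁻¹ (perm2 τ t₀ h₀ x)) = t₀ ((perm1 τ t₀ h₀)⁻¹ (perm2 τ t₀ h₀ x))
  · rw [if_pos hc, if_pos (hrel.mp hc)]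
  · rw [if_neg hc, if_neg (fun hcc => hc (hrel.mpr hcc))]

lemma valid_toT (f : Fin n → Bool) (hf : ∀ x, f (rhoP τ t₀ h₀ x) = f x) :
    Valid τ (fun i => if f i then flip2 (t₀ i) else t₀ i) := by
  intro j
  set t := fun i => if f i then flip2 (t₀ i) else t₀ i with ht
  set r1 := (perm1 τ t₀ h₀)⁻¹ j with hr1
  set r2 := (perm2 τ t₀ h₀)⁻¹ j with hr2
  set p : Fin n × Fin 2 := (r1, t₀ r1) with hp
  set q : Fin n × Fin 2 := (r2, flip2 (t₀ r2)) with hq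
  have hpc : (τ p).1 = j := cell_p_col h₀ j
  have hqc : (τ q).1 = j := cell_q_col h₀ j
  have hpq : p ≠ q := cell_pq_ne h₀ j
  have hfr : f r1 = f r2 := by
    have : rhoP τ t₀ h₀ r2 = r1 := by
      rw [rhoP_apply]
      have : perm2 τ t₀ h₀ r2 = j := Equiv.Perm.apply_inv_self _ _
      rw [this]
    rw [← this, hf]
  have hselp : (p.2 = t p.1) ↔ f r1 = false := by
    rw [hp, ht]
    simp only []
    by_cases hc : f r1 = true
    · rw [if_pos hc, hc]
      constructor
      · intro hcc; exact absurd hcc.symm (flip2_ne _)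
      · intro hcc; exact absurd hcc (by simp)
    · simp only [Bool.not_eq_true] at hc
      rw [hc]
      simp
  have hselq : (q.2 = t q.1) ↔ f r2 = true := by
    rw [hq, ht]
    simp only []
    by_cases hc : f r2 = true
    · rw [if_pos hc, hc]
      simp
    · simp only [Bool.not_eq_true] at hc
      rw [hc]
      simp only [Bool.false_eq_true, if_false, iff_false]
      intro hcc
      exact flip2_ne _ hcc
  -- B0, B1 are p,q in some order
  have hB0 : (τ (τ.symm (j,(0:Fin 2)))).1 = j := by rw [Equiv.apply_symm_apply]
  have hB1 : (τ (τ.symm (j,(1:Fin 2)))).1 = j := by rw [Equiv.apply_symm_apply]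
  rcases pair_cover hpc hqc hpq hB0 with h0 | h0 <;>
    rcases pair_cover hpc hqc hpq hB1 with h1 | h1
  · exact absurd (h0.trans h1.symm) (Bne τ j)
  · rw [h0, h1, hselp, hselq, ← hfr]
    by_cases hc : f r1 = true <;> simp [hc]
  · rw [h0, h1, hselp, hselq, ← hfr]
    by_cases hc : f r1 = true <;> simp [hc]
  · exact absurd (h0.trans h1.symm) (Bne τ j)

lemma rhoP_toT (f : Fin n → Bool) (hf : ∀ x, f (rhoP τ t₀ h₀ x) = f x)
    (h' : Valid τ (fun i => if f i then flip2 (t₀ i) else t₀ i)) :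
    rhoP τ (fun i => if f i then flip2 (t₀ i) else t₀ i) h' = pwPerm (rhoP τ t₀ h₀) f hf := by
  have hperm1 : ∀ z, perm1 τ (fun i => if f i then flip2 (t₀ i) else t₀ i) h' z
      = if f z then perm2 τ t₀ h₀ z else perm1 τ t₀ h₀ z := by
    intro z
    rw [perm1_apply, perm2_apply, perm1_apply]
    by_cases hc : f z = true
    · simp only [hc, if_true]
    · simp only [Bool.not_eq_true] at hc
      simp only [hc, Bool.false_eq_true, if_false]
  have hperm2 : ∀ z, perm2 τ (fun i => if f i then flip2 (t₀ i) else t₀ i) h' z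
      = if f z then perm1 τ t₀ h₀ z else perm2 τ t₀ h₀ z := by
    intro z
    rw [perm2_apply, perm2_apply, perm1_apply]
    by_cases hc : f z = true
    · simp only [hc, if_true, flip2_flip2]
    · simp only [Bool.not_eq_true] at hc
      simp only [hc, Bool.false_eq_true, if_false]
  apply Equiv.ext
  intro x
  have key : perm2 τ (fun i => if f i then flip2 (t₀ i) else t₀ i) h' x
      = perm1 τ (fun i => if f i then flip2 (t₀ i) else t₀ i) h'
          (if f x then (rhoP τ t₀ h₀)⁻¹ x else rhoP τ t₀ h₀ x) := by
    rw [hperm2]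
    by_cases hc : f x = true
    · rw [if_pos hc, if_pos hc, hperm1]
      have hfx : f ((rhoP τ t₀ h₀)⁻¹ x) = true := by rw [invariant_apply_inv hf, hc]
      rw [if_pos hfx, rhoP_inv_apply, Equiv.Perm.apply_inv_self]
    · simp only [Bool.not_eq_true] at hc
      simp only [hc, Bool.false_eq_true, if_false]
      rw [hperm1]
      have hfx : f (rhoP τ t₀ h₀ x) = false := by rw [hf, hc]
      simp only [hfx, Bool.false_eq_true, if_false]
      rw [rhoP_apply, Equiv.Perm.apply_inv_self]
  have : rhoP τ (fun i => if f i then flip2 (t₀ i) else t₀ i) h' x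
      = (perm1 τ (fun i => if f i then flip2 (t₀ i) else t₀ i) h')⁻¹
          (perm2 τ (fun i => if f i then flip2 (t₀ i) else t₀ i) h' x) := rfl
  rw [this, key, Equiv.Perm.inv_apply_self]
  rfl

end Base

lemma rhoP_congr {τ : Perm (Fin n × Fin 2)} {t t' : Fin n → Fin 2} (het : t = t')
    (h : Valid τ t) (h' : Valid τ t') : rhoP τ t h = rhoP τ t' h' := by
  subst het; rfl

lemma sum_weight (τ : Perm (Fin n × Fin 2)) :
    ∑ t ∈ univ.filter (Valid τ), weight τ t = 1 := by
  classical
  obtain ⟨t₀, h₀⟩ := exists_valid τ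
  set ρ₀ := rhoP τ t₀ h₀ with hρ₀
  set c₀ := ρ₀.cycleType.card + fixCount ρ₀ with hc₀
  have htoT : ∀ t : Fin n → Fin 2,
      (fun i => if (if t i = t₀ i then false else true) = true then flip2 (t₀ i) else t₀ i) = t := by
    intro t
    funext i
    by_cases hc : t i = t₀ i
    · simp [hc]
    · simp only [hc, if_false]
      exact (eq_flip2_of_ne hc).symm
  have hconst : ∀ t ∈ univ.filter (Valid τ), weight τ t = ((2:ℝ)^c₀)⁻¹ := by
    intro t ht
    have h : Valid τ t := (Finset.mem_filter.mp ht).2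
    rw [weight, dif_pos h]
    set f : Fin n → Bool := fun i => if t i = t₀ i then false else true with hfd
    have hf : ∀ x, f (ρ₀ x) = f x := toF_invariant h₀ h
    have h' : Valid τ (fun i => if f i then flip2 (t₀ i) else t₀ i) := valid_toT h₀ f hf
    have he1 : rhoP τ t h = rhoP τ (fun i => if f i then flip2 (t₀ i) else t₀ i) h' :=
      rhoP_congr (by rw [hfd]; exact (htoT t).symm) h h'
    rw [he1, rhoP_toT h₀ f hf h']
    obtain ⟨hcyc, hfix⟩ := pwPerm_counts ρ₀ f hf
    have hfix' : fixCount (pwPerm ρ₀ f hf) = fixCount ρ₀ := hfix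
    rw [hc₀, hcyc, hfix']
  rw [Finset.sum_congr rfl hconst, Finset.sum_const]
  have hcard : (univ.filter (Valid τ)).card = 2 ^ c₀ := by
    have hbij : (univ.filter (Valid τ)).card
        = (@Finset.filter _ (fun f : Fin n → Bool => ∀ x, f (ρ₀ x) = f x)
            (fun f => Fintype.decidableForallFintype) univ).card := by
      apply Finset.card_nbij' (i := fun t i => if t i = t₀ i then false else true)
        (j := fun f i => if f i then flip2 (t₀ i) else t₀ i)
      · intro t ht
        simp only [Finset.mem_coe, Finset.mem_filter] at ht ⊢
        exact ⟨Finset.mem_univ _, toF_invariant h₀ ht.2⟩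
      · intro f hf
        simp only [Finset.mem_coe, Finset.mem_filter] at hf ⊢
        exact ⟨Finset.mem_univ _, valid_toT h₀ f hf.2⟩
      · intro t _
        exact htoT t
      · intro f _
        funext i
        by_cases hc : f i = true
        · have hne : flip2 (t₀ i) ≠ t₀ i := flip2_ne _
          simp [hc, hne]
        · simp only [Bool.not_eq_true] at hc
          simp [hc]
    have hcount := card_invariant_bool ρ₀
    rw [card_QS ρ₀] at hcount
    rw [hbij, hcount, hc₀]
    rfl
  rw [hcard, nsmul_eq_mul]
  push_cast
  rw [mul_inv_cancel₀]
  positivity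


/-- the pair of permutations associated with a valid selection (junk value otherwise) -/
noncomputable def Phi (τ : Perm (Fin n × Fin 2)) (t : Fin n → Fin 2) :
    Perm (Fin n) × Perm (Fin n) :=
  if h : Valid τ t then (perm1 τ t h, perm2 τ t h) else 1

lemma eDeg_split (τ : Perm (Fin n × Fin 2)) (t : Fin n → Fin 2) (i j : Fin n) :
    eDeg τ i j = (if (τ (i, t i)).1 = j then 1 else 0)
      + (if (τ (i, flip2 (t i))).1 = j then 1 else 0) := by
  rw [eDeg, Finset.card_filter, Fin.sum_univ_two]
  rcases fin2cases (t i) with hti | hti <;> rw [hti]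
  · norm_num [flip2]
  · rw [show flip2 1 = 0 from rfl, add_comm]

/-- build `τ` from a pair of permutations and free data `t`, `κ` -/
def buildTau (σ₁ σ₂ : Perm (Fin n)) (t κ : Fin n → Fin 2) : Perm (Fin n × Fin 2) where
  toFun p := if p.2 = t p.1 then (σ₁ p.1, κ (σ₁ p.1)) else (σ₂ p.1, flip2 (κ (σ₂ p.1)))
  invFun q := if q.2 = κ q.1 then (σ₁.symm q.1, t (σ₁.symm q.1))
    else (σ₂.symm q.1, flip2 (t (σ₂.symm q.1)))
  left_inv p := by
    by_cases hp : p.2 = t p.1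
    · simp only [if_pos hp]
      simp [← hp]
    · simp only [if_neg hp]
      simp only [flip2_ne _, if_false, Equiv.symm_apply_apply]
      rw [← eq_flip2_of_ne hp]
  right_inv q := by
    by_cases hq : q.2 = κ q.1
    · simp only [if_pos hq]
      simp [← hq]
    · simp only [if_neg hq]
      simp only [flip2_ne _, if_false, Equiv.apply_symm_apply]
      rw [← eq_flip2_of_ne hq]

lemma buildTau_apply (σ₁ σ₂ : Perm (Fin n)) (t κ : Fin n → Fin 2) (p : Fin n × Fin 2) :
    buildTau σ₁ σ₂ t κ p = if p.2 = t p.1 then (σ₁ p.1, κ (σ₁ p.1))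
      else (σ₂ p.1, flip2 (κ (σ₂ p.1))) := rfl

lemma buildTau_symm_apply (σ₁ σ₂ : Perm (Fin n)) (t κ : Fin n → Fin 2) (q : Fin n × Fin 2) :
    (buildTau σ₁ σ₂ t κ).symm q = if q.2 = κ q.1 then (σ₁.symm q.1, t (σ₁.symm q.1))
      else (σ₂.symm q.1, flip2 (t (σ₂.symm q.1))) := rfl

lemma buildTau_valid (σ₁ σ₂ : Perm (Fin n)) (t κ : Fin n → Fin 2) :
    Valid (buildTau σ₁ σ₂ t κ) t := by
  intro j
  rcases fin2cases (κ j) with hκ | hκ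
  · have e0 : (buildTau σ₁ σ₂ t κ).symm (j,(0:Fin 2)) = (σ₁.symm j, t (σ₁.symm j)) := by
      rw [buildTau_symm_apply]
      simp [hκ]
    have e1 : (buildTau σ₁ σ₂ t κ).symm (j,(1:Fin 2))
        = (σ₂.symm j, flip2 (t (σ₂.symm j))) := by
      rw [buildTau_symm_apply]
      simp [hκ]
    rw [e0, e1]
    simp [flip2_ne _]
  · have e0 : (buildTau σ₁ σ₂ t κ).symm (j,(0:Fin 2))
        = (σ₂.symm j, flip2 (t (σ₂.symm j))) := by
      rw [buildTau_symm_apply]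
      simp [hκ]
    have e1 : (buildTau σ₁ σ₂ t κ).symm (j,(1:Fin 2)) = (σ₁.symm j, t (σ₁.symm j)) := by
      rw [buildTau_symm_apply]
      simp [hκ]
    rw [e0, e1]
    simp [flip2_ne _]

lemma buildTau_Phi (σ₁ σ₂ : Perm (Fin n)) (t κ : Fin n → Fin 2) :
    Phi (buildTau σ₁ σ₂ t κ) t = (σ₁, σ₂) := by
  rw [Phi, dif_pos (buildTau_valid σ₁ σ₂ t κ)]
  have h1 : perm1 (buildTau σ₁ σ₂ t κ) t (buildTau_valid σ₁ σ₂ t κ) = σ₁ := by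
    apply Equiv.ext
    intro i
    rw [perm1_apply, buildTau_apply, if_pos rfl]
  have h2 : perm2 (buildTau σ₁ σ₂ t κ) t (buildTau_valid σ₁ σ₂ t κ) = σ₂ := by
    apply Equiv.ext
    intro i
    rw [perm2_apply, buildTau_apply, if_neg (flip2_ne _)]
  rw [h1, h2]

lemma buildTau_recover {τ : Perm (Fin n × Fin 2)} {t : Fin n → Fin 2} (h : Valid τ t)
    {σ₁ σ₂ : Perm (Fin n)} (hy : Phi τ t = (σ₁, σ₂)) :
    buildTau σ₁ σ₂ t (fun j => (τ (σ₁.symm j, t (σ₁.symm j))).2) = τ := by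
  have hσ₁ : σ₁ = perm1 τ t h := by
    rw [Phi, dif_pos h] at hy
    exact (congrArg Prod.fst hy).symm
  have hσ₂ : σ₂ = perm2 τ t h := by
    rw [Phi, dif_pos h] at hy
    exact (congrArg Prod.snd hy).symm
  apply Equiv.ext
  intro p
  rw [buildTau_apply]
  by_cases hp : p.2 = t p.1
  · rw [if_pos hp]
    have hp' : p = (p.1, t p.1) := Prod.ext rfl hp
    have h1 : σ₁ p.1 = (τ p).1 := by
      rw [hσ₁, perm1_apply]
      conv_rhs => rw [hp']
    have h2 : σ₁.symm (σ₁ p.1) = p.1 := Equiv.symm_apply_apply _ _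
    rw [h1]
    apply Prod.ext
    · rfl
    · simp only []
      rw [← h1, h2, ← hp']
  · rw [if_neg hp]
    have hp' : p = (p.1, flip2 (t p.1)) := Prod.ext rfl (eq_flip2_of_ne hp)
    have h2 : σ₂ p.1 = (τ p).1 := by
      rw [hσ₂, perm2_apply]
      conv_rhs => rw [hp']
    rw [h2]
    -- q is the selected cell of the column (τ p).1
    have hscol : ∀ j, (τ (σ₁.symm j, t (σ₁.symm j))).1 = j := by
      intro j
      have h1 : (τ (σ₁.symm j, t (σ₁.symm j))).1 = perm1 τ t h (σ₁.symm j) := rfl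
      rw [h1, ← hσ₁, Equiv.apply_symm_apply]
    set q : Fin n × Fin 2 := (σ₁.symm (τ p).1, t (σ₁.symm (τ p).1)) with hqdef
    have hqcol : (τ q).1 = (τ p).1 := hscol (τ p).1
    have hqp : q ≠ p := by
      intro hc
      have h3 := congrArg Prod.snd hc
      rw [← hc] at hp
      exact hp rfl
    have hτne : (τ q).2 ≠ (τ p).2 := by
      intro hc
      exact hqp (τ.injective (Prod.ext hqcol hc))
    apply Prod.ext
    · rfl
    · simp only []
      exact (eq_flip2_of_ne (fun hc => hτne hc.symm)).symm

/-- moment value: `2` for degree `0`, `μ₁` for degree `1`, `μ₂` for degree `2` -/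
def mval (μ₁ μ₂ : ℝ) : ℕ → ℝ := fun e => if e = 0 then 2 else if e = 1 then μ₁ else μ₂

lemma fiber_card (y : Perm (Fin n) × Perm (Fin n)) :
    ((univ : Finset (Perm (Fin n × Fin 2) × (Fin n → Fin 2))).filter
      (fun x => Valid x.1 x.2 ∧ Phi x.1 x.2 = y)).card = 2^n * 2^n := by
  have hc : ((univ : Finset ((Fin n → Fin 2) × (Fin n → Fin 2)))).card = 2^n * 2^n := by
    rw [Finset.card_univ, Fintype.card_prod, Fintype.card_fun, Fintype.card_fin,
      Fintype.card_fin]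
  rw [← hc]
  apply Finset.card_nbij'
    (i := fun x => (x.2, fun j => (x.1 (y.1.symm j, x.2 (y.1.symm j))).2))
    (j := fun tk => (buildTau y.1 y.2 tk.1 tk.2, tk.1))
  · intro x _
    exact Finset.mem_coe.mpr (Finset.mem_univ _)
  · intro tk _
    simp only [Finset.mem_coe, Finset.mem_filter]
    refine ⟨Finset.mem_univ _, buildTau_valid _ _ _ _, ?_⟩
    rw [buildTau_Phi]
  · intro x hx
    simp only [Finset.mem_coe, Finset.mem_filter] at hx
    obtain ⟨_, hval, hPhi⟩ := hx
    have hPhi' : Phi x.1 x.2 = (y.1, y.2) := by rw [hPhi]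
    exact Prod.ext (buildTau_recover hval hPhi') rfl
  · intro tk _
    apply Prod.ext
    · rfl
    · funext j
      simp only []
      rw [buildTau_apply, if_pos rfl]
      simp only []
      rw [Equiv.apply_symm_apply]

lemma fiber_value {τ : Perm (Fin n × Fin 2)} {t : Fin n → Fin 2} (h : Valid τ t)
    {σ₁ σ₂ : Perm (Fin n)} (hy : Phi τ t = (σ₁, σ₂)) (μ₁ μ₂ : ℝ) :
    (∏ i, ∏ j, mval μ₁ μ₂ (eDeg τ i j)) * weight τ t
      = (∏ i, ∏ j, mval μ₁ μ₂ ((if σ₁ i = j then 1 else 0) + (if σ₂ i = j then 1 else 0)))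
        * ((2:ℝ) ^ ((σ₁⁻¹ * σ₂).cycleType.card + fixCount (σ₁⁻¹ * σ₂)))⁻¹ := by
  have hσ₁ : perm1 τ t h = σ₁ := by
    rw [Phi, dif_pos h] at hy
    exact congrArg Prod.fst hy
  have hσ₂ : perm2 τ t h = σ₂ := by
    rw [Phi, dif_pos h] at hy
    exact congrArg Prod.snd hy
  congr 1
  · refine Finset.prod_congr rfl (fun i _ => Finset.prod_congr rfl (fun j _ => ?_))
    rw [eDeg_split τ t i j]
    congr 2
    · rw [← hσ₁, perm1_apply]
    · rw [← hσ₂, perm2_apply]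
  · rw [weight, dif_pos h]
    have : rhoP τ t h = σ₁⁻¹ * σ₂ := by rw [rhoP, hσ₁, hσ₂]
    rw [this]

lemma weight_eq_zero {τ : Perm (Fin n × Fin 2)} {t : Fin n → Fin 2} (h : ¬ Valid τ t) :
    weight τ t = 0 := by rw [weight, dif_neg h]

/-- the master combinatorial identity -/
lemma master (μ₁ μ₂ : ℝ) :
    ∑ τ : Perm (Fin n × Fin 2), ∏ i, ∏ j, mval μ₁ μ₂ (eDeg τ i j)
      = ∑ y : Perm (Fin n) × Perm (Fin n),
          (2^n * 2^n : ℕ) •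
            ((∏ i, ∏ j, mval μ₁ μ₂
                ((if y.1 i = j then 1 else 0) + (if y.2 i = j then 1 else 0)))
              * ((2:ℝ) ^ ((y.1⁻¹ * y.2).cycleType.card + fixCount (y.1⁻¹ * y.2)))⁻¹) := by
  classical
  have step1 : ∀ τ : Perm (Fin n × Fin 2),
      ∏ i, ∏ j, mval μ₁ μ₂ (eDeg τ i j)
        = ∑ t : Fin n → Fin 2, (∏ i, ∏ j, mval μ₁ μ₂ (eDeg τ i j)) * weight τ t := by
    intro τ
    rw [← Finset.mul_sum]
    have h2 : ∑ t : Fin n → Fin 2, weight τ t = ∑ t ∈ univ.filter (Valid τ), weight τ t := by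
      symm
      apply Finset.sum_filter_of_ne
      intro t _ hne
      by_contra hv
      exact hne (weight_eq_zero hv)
    rw [h2, sum_weight, mul_one]
  rw [Finset.sum_congr rfl (fun τ _ => step1 τ)]
  have hprod := Fintype.sum_prod_type
    (f := fun x : Perm (Fin n × Fin 2) × (Fin n → Fin 2) =>
      (∏ i, ∏ j, mval μ₁ μ₂ (eDeg x.1 i j)) * weight x.1 x.2)
  simp only [] at hprod
  rw [← hprod]
  rw [← Finset.sum_fiberwise_of_maps_to
    (g := fun x : Perm (Fin n × Fin 2) × (Fin n → Fin 2) => Phi x.1 x.2)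
    (fun x _ => Finset.mem_univ _)
    (fun x => (∏ i, ∏ j, mval μ₁ μ₂ (eDeg x.1 i j)) * weight x.1 x.2)]
  refine Finset.sum_congr rfl (fun y _ => ?_)
  have hsub : (univ.filter fun x : Perm (Fin n × Fin 2) × (Fin n → Fin 2) =>
      Valid x.1 x.2 ∧ Phi x.1 x.2 = y)
      ⊆ univ.filter (fun x => Phi x.1 x.2 = y) := by
    intro x hx
    simp only [Finset.mem_filter] at hx ⊢
    exact ⟨hx.1, hx.2.2⟩
  rw [← Finset.sum_subset hsub (by
    intro x hx hnx
    simp only [Finset.mem_filter] at hx hnx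
    have : ¬ Valid x.1 x.2 := by
      intro hv
      exact hnx ⟨hx.1, hv, hx.2⟩
    rw [weight_eq_zero this, mul_zero])]
  rw [Finset.sum_congr rfl (fun x hx => by
    simp only [Finset.mem_filter] at hx
    have hPhi' : Phi x.1 x.2 = (y.1, y.2) := by rw [hx.2.2]
    exact fiber_value hx.2.1 hPhi' μ₁ μ₂)]
  rw [Finset.sum_const, fiber_card]


lemma mval_two (μ₁ μ₂ : ℝ) : mval μ₁ μ₂ 2 = μ₂ := by norm_num [mval]
lemma mval_one (μ₁ μ₂ : ℝ) : mval μ₁ μ₂ 1 = μ₁ := by norm_num [mval]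
lemma mval_zero (μ₁ μ₂ : ℝ) : mval μ₁ μ₂ 0 = 2 := by norm_num [mval]

lemma fixCount_le (ρ : Perm (Fin n)) : fixCount ρ ≤ n := by
  rw [fixCount]
  exact (Finset.card_filter_le _ _).trans (by simp)

lemma fixCount_of_one (h : n = 1) (ρ : Perm (Fin n)) : fixCount ρ = 1 := by
  subst h
  rw [fixCount, Finset.filter_true_of_mem (fun i _ => Subsingleton.elim _ _)]
  simp

lemma pow_arith {F : ℕ} (hF : F ≤ n) (h1 : n = 1 → F = 1) :
    2*n + ((n-1)*F + (n-2)*(n-F)) = n^2 + F := by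
  rcases Nat.lt_or_ge n 2 with h | h
  · interval_cases n
    · omega
    · have hf1 := h1 rfl
      subst hf1
      norm_num
  · obtain ⟨m, rfl⟩ : ∃ m, n = m + 2 := ⟨n - 2, by omega⟩
    obtain ⟨h', hFh⟩ : ∃ h', F + h' = m + 2 := ⟨m + 2 - F, by omega⟩
    have e1 : m + 2 - F = h' := by omega
    have e2 : m + 2 - 1 = m + 1 := by omega
    have e3 : m + 2 - 2 = m := by omega
    rw [e1, e2, e3]
    zify
    have hFh' : (F:ℤ) + h' = m + 2 := by exact_mod_cast hFh
    linear_combination (m:ℤ) * hFh'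

lemma pair_prod (σ₁ σ₂ : Perm (Fin n)) (μ₁ μ₂ : ℝ) :
    (∏ i, ∏ j, mval μ₁ μ₂ ((if σ₁ i = j then 1 else 0) + (if σ₂ i = j then 1 else 0)))
      = (μ₂ * (2:ℝ)^(n-1)) ^ fixCount (σ₁⁻¹ * σ₂)
        * ((μ₁ * μ₁) * (2:ℝ)^(n-2)) ^ (n - fixCount (σ₁⁻¹ * σ₂)) := by
  classical
  have hrow : ∀ i, (∏ j, mval μ₁ μ₂ ((if σ₁ i = j then 1 else 0) + (if σ₂ i = j then 1 else 0)))
      = if σ₁ i = σ₂ i then μ₂ * (2:ℝ)^(n-1) else (μ₁*μ₁) * (2:ℝ)^(n-2) := by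
    intro i
    by_cases hc : σ₁ i = σ₂ i
    · rw [if_pos hc]
      rw [← Finset.mul_prod_erase univ _ (Finset.mem_univ (σ₁ i))]
      have h1 : mval μ₁ μ₂ ((if σ₁ i = σ₁ i then 1 else 0) + (if σ₂ i = σ₁ i then 1 else 0))
          = μ₂ := by
        rw [if_pos rfl, if_pos hc.symm, mval_two]
      rw [h1]
      congr 1
      have h2 : ∀ j ∈ univ.erase (σ₁ i),
          mval μ₁ μ₂ ((if σ₁ i = j then 1 else 0) + (if σ₂ i = j then 1 else 0)) = 2 := by
        intro j hj
        have hj' := (Finset.mem_erase.mp hj).1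
        rw [if_neg (fun hcc => hj' hcc.symm), if_neg (fun hcc => hj' (hc ▸ hcc).symm), mval_zero]
      rw [Finset.prod_congr rfl h2, Finset.prod_const, Finset.card_erase_of_mem (Finset.mem_univ _),
        Finset.card_univ, Fintype.card_fin]
    · rw [if_neg hc]
      have hmem2 : σ₂ i ∈ univ.erase (σ₁ i) :=
        Finset.mem_erase.mpr ⟨fun hcc => hc hcc.symm, Finset.mem_univ _⟩
      rw [← Finset.mul_prod_erase univ _ (Finset.mem_univ (σ₁ i)),
        ← Finset.mul_prod_erase _ _ hmem2]
      have h1 : mval μ₁ μ₂ ((if σ₁ i = σ₁ i then 1 else 0) + (if σ₂ i = σ₁ i then 1 else 0))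
          = μ₁ := by
        rw [if_pos rfl, if_neg (fun hcc => hc hcc.symm), mval_one]
      have h2 : mval μ₁ μ₂ ((if σ₁ i = σ₂ i then 1 else 0) + (if σ₂ i = σ₂ i then 1 else 0))
          = μ₁ := by
        rw [if_neg hc, if_pos rfl, mval_one]
      rw [h1, h2]
      have h3 : ∀ j ∈ (univ.erase (σ₁ i)).erase (σ₂ i),
          mval μ₁ μ₂ ((if σ₁ i = j then 1 else 0) + (if σ₂ i = j then 1 else 0)) = 2 := by
        intro j hj
        have hj1 := (Finset.mem_erase.mp hj).1
        have hj2 := (Finset.mem_erase.mp (Finset.mem_erase.mp hj).2).1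
        rw [if_neg (fun hcc => hj2 hcc.symm), if_neg (fun hcc => hj1 hcc.symm), mval_zero]
      rw [Finset.prod_congr rfl h3, Finset.prod_const]
      have hcard : ((univ.erase (σ₁ i)).erase (σ₂ i)).card = n - 2 := by
        rw [Finset.card_erase_of_mem hmem2, Finset.card_erase_of_mem (Finset.mem_univ _),
          Finset.card_univ, Fintype.card_fin]
        omega
      rw [hcard]
      ring
  rw [Finset.prod_congr rfl (fun i _ => hrow i)]
  rw [Finset.prod_ite (fun _ => μ₂ * (2:ℝ)^(n-1)) (fun _ => (μ₁*μ₁) * (2:ℝ)^(n-2))]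
  rw [Finset.prod_const, Finset.prod_const]
  have hfix : (univ.filter fun i => σ₁ i = σ₂ i).card = fixCount (σ₁⁻¹ * σ₂) := by
    rw [fixCount]
    congr 1
    apply Finset.filter_congr
    intro i _
    simp only [Equiv.Perm.mul_apply]
    constructor
    · intro he
      rw [← he]
      exact Equiv.Perm.inv_apply_self σ₁ i
    · intro he
      have := congrArg σ₁ he
      rw [Equiv.Perm.apply_inv_self] at this
      exact this.symm
  have htot := Finset.card_filter_add_card_filter_not
    (s := (univ : Finset (Fin n))) (p := fun i => σ₁ i = σ₂ i)
  rw [Finset.card_univ, Fintype.card_fin, hfix] at htot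
  have hneg : (univ.filter fun i => ¬ σ₁ i = σ₂ i).card = n - fixCount (σ₁⁻¹ * σ₂) := by
    omega
  rw [hfix, hneg]

lemma per_pair_value (σ₁ σ₂ : Perm (Fin n)) (μ₁ μ₂ : ℝ) :
    ((2:ℝ)^(n^2))⁻¹ * ((2^n * 2^n : ℕ) •
      ((∏ i, ∏ j, mval μ₁ μ₂ ((if σ₁ i = j then 1 else 0) + (if σ₂ i = j then 1 else 0)))
        * ((2:ℝ) ^ ((σ₁⁻¹*σ₂).cycleType.card + fixCount (σ₁⁻¹*σ₂)))⁻¹))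
    = μ₂ ^ fixCount (σ₁⁻¹*σ₂) * (μ₁^2) ^ (n - fixCount (σ₁⁻¹*σ₂))
        * ((2:ℝ) ^ (σ₁⁻¹*σ₂).cycleType.card)⁻¹ := by
  have hF : fixCount (σ₁⁻¹*σ₂) ≤ n := fixCount_le _
  have h1 : n = 1 → fixCount (σ₁⁻¹*σ₂) = 1 := fun h => fixCount_of_one h _
  have harith := pow_arith (n := n) hF h1
  rw [pair_prod σ₁ σ₂ μ₁ μ₂]
  set F := fixCount (σ₁⁻¹*σ₂) with hFdef
  set c := (σ₁⁻¹*σ₂).cycleType.card with hcdef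
  rw [nsmul_eq_mul]
  push_cast
  rw [mul_pow, mul_pow, ← pow_mul, ← pow_mul]
  have key : (2:ℝ)^n * (2:ℝ)^n * ((2:ℝ)^((n-1)*F) * (2:ℝ)^((n-2)*(n-F)))
      = (2:ℝ)^(n^2) * (2:ℝ)^F := by
    rw [← pow_add, ← pow_add, ← pow_add, ← pow_add]
    congr 1
    calc n + n + ((n-1)*F + (n-2)*(n-F))
        = 2*n + ((n-1)*F + (n-2)*(n-F)) := by ring
      _ = n^2 + F := harith
  rw [pow_add (2:ℝ) c F]
  have h2F : (2:ℝ)^F ≠ 0 := pow_ne_zero _ two_ne_zero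
  have h2c : (2:ℝ)^c ≠ 0 := pow_ne_zero _ two_ne_zero
  have h2n : (2:ℝ)^(n^2) ≠ 0 := pow_ne_zero _ two_ne_zero
  calc ((2:ℝ)^(n^2))⁻¹ * ((2:ℝ)^n * (2:ℝ)^n *
        (μ₂^F * ((2:ℝ)^((n-1)*F)) * ((μ₁*μ₁)^(n-F) * ((2:ℝ)^((n-2)*(n-F))))
          * ((2:ℝ)^c * (2:ℝ)^F)⁻¹))
      = (μ₂^F * (μ₁*μ₁)^(n-F)) *
          (((2:ℝ)^n * (2:ℝ)^n * ((2:ℝ)^((n-1)*F) * (2:ℝ)^((n-2)*(n-F))))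
            * (((2:ℝ)^(n^2))⁻¹ * ((2:ℝ)^c * (2:ℝ)^F)⁻¹)) := by ring
    _ = (μ₂^F * (μ₁*μ₁)^(n-F)) *
          (((2:ℝ)^(n^2) * (2:ℝ)^F)
            * (((2:ℝ)^(n^2))⁻¹ * ((2:ℝ)^c * (2:ℝ)^F)⁻¹)) := by rw [key]
    _ = μ₂^F * (μ₁^2)^(n-F) * ((2:ℝ)^c)⁻¹ := by
        rw [pow_two μ₁]
        field_simp

end Comb

end BetheAux

/-- if the `n²` entries `a i j` of a random `n×n` matrix `A` are jointly
independent, nonnegative, square-integrable, with `E[a i j] = μ₁` and `E[(a i j)²] = μ₂`,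
then, with `perm_{Bethe,2}(A)² = 2^{-n²} · Σ_s perm(A↑s)`, it holds that
`E[perm_{Bethe,2}(A)²] = n! · Σ_{σ ∈ S_n} μ₂^{fix(σ)} · (μ₁²)^{n−fix(σ)} · 2^{-c(σ)}`,
where `c(σ)` is the number of cycles of `σ` of length greater than one. -/
theorem expectation_bethe2_perm_sq {Ω : Type*} [MeasurableSpace Ω] (μ : Measure Ω)
    [IsProbabilityMeasure μ] (n : ℕ) (hn : 1 ≤ n)
    (a : Fin n → Fin n → Ω → ℝ) (μ₁ μ₂ : ℝ)
    (hmeas : ∀ i j, Measurable (a i j))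
    (hnonneg : ∀ i j ω, 0 ≤ a i j ω)
    (hL2 : ∀ i j, MemLp (a i j) 2 μ)
    (hindep : iIndepFun (fun p : Fin n × Fin n => a p.1 p.2) μ)
    (hmean : ∀ i j, ∫ ω, a i j ω ∂μ = μ₁)
    (hsecond : ∀ i j, ∫ ω, (a i j ω) ^ 2 ∂μ = μ₂) :
    ∫ ω, ((2 : ℝ) ^ (n ^ 2))⁻¹ *
        ∑ s : Fin n → Fin n → Equiv.Perm (Fin 2),
          matPerm (coverLift (fun i j => a i j ω) s) ∂μ
      = (Nat.factorial n : ℝ) *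
          ∑ σ : Equiv.Perm (Fin n),
            μ₂ ^ fixCount σ * (μ₁ ^ 2) ^ (n - fixCount σ) *
              ((2 : ℝ) ^ σ.cycleType.card)⁻¹ := by
  classical
  open BetheAux in
  have hsc : ∀ ω : Ω, ((2 : ℝ) ^ (n ^ 2))⁻¹ *
      ∑ s : Fin n → Fin n → Equiv.Perm (Fin 2),
        matPerm (coverLift (fun i j => a i j ω) s)
      = ((2:ℝ)^(n^2))⁻¹ * ∑ τ : Equiv.Perm (Fin n × Fin 2), ∏ i, ∏ j,
          (if eDeg τ i j = 0 then (2:ℝ) else a i j ω ^ eDeg τ i j) :=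
    fun ω => by exact congrArg _ (sum_covers _)
  simp only [hsc]
  rw [MeasureTheory.integral_const_mul]
  -- the random variables attached to a fixed τ
  set X : Equiv.Perm (Fin n × Fin 2) → (Fin n × Fin n) → Ω → ℝ :=
    fun τ p ω => if eDeg τ p.1 p.2 = 0 then (2:ℝ)
      else a p.1 p.2 ω ^ eDeg τ p.1 p.2 with hX
  have hXprod : ∀ (τ : Equiv.Perm (Fin n × Fin 2)) (ω : Ω),
      (∏ i, ∏ j, (if eDeg τ i j = 0 then (2:ℝ) else a i j ω ^ eDeg τ i j))
        = ∏ p : Fin n × Fin n, X τ p ω := by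
    intro τ ω
    rw [Fintype.prod_prod_type (f := fun p : Fin n × Fin n => X τ p ω)]
  have hedle : ∀ (τ : Equiv.Perm (Fin n × Fin 2)) (p : Fin n × Fin n),
      eDeg τ p.1 p.2 ≤ 2 := by
    intro τ p
    rw [eDeg]
    exact (Finset.card_filter_le _ _).trans (by simp)
  have hXmeas : ∀ τ p, Measurable (X τ p) := by
    intro τ p
    by_cases h : eDeg τ p.1 p.2 = 0
    · simp only [hX, h, if_pos]
      exact measurable_const
    · simp only [hX, h, if_neg, if_false]
      exact (hmeas p.1 p.2).pow_const _
  have hXint : ∀ τ p, MeasureTheory.Integrable (X τ p) μ := by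
    intro τ p
    by_cases h0 : eDeg τ p.1 p.2 = 0
    · simp only [hX, h0, if_pos]
      exact MeasureTheory.integrable_const _
    · by_cases h1 : eDeg τ p.1 p.2 = 1
      · simp only [hX, h0, h1, if_neg, if_false, pow_one]
        exact (hL2 p.1 p.2).integrable one_le_two
      · have h2 : eDeg τ p.1 p.2 = 2 := by
          have := hedle τ p
          omega
        simp only [hX, h0, h2, if_neg, if_false]
        exact (hL2 p.1 p.2).integrable_sq
  have hXindep : ∀ τ, iIndepFun (X τ) μ := by
    intro τ
    have := hindep.comp
      (g := fun (p : Fin n × Fin n) (v : ℝ) =>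
        if eDeg τ p.1 p.2 = 0 then (2:ℝ) else v ^ eDeg τ p.1 p.2)
      (fun p => by
        by_cases h : eDeg τ p.1 p.2 = 0
        · simp only [h, if_pos]
          exact measurable_const
        · simp only [h, if_neg, if_false]
          exact measurable_id.pow_const _)
    exact this
  have hterm := fun τ => integral_prod_indep (μ := μ) (X τ) (hXmeas τ) (hXint τ)
    (hXindep τ) Finset.univ
  simp only [hXprod]
  rw [MeasureTheory.integral_finset_sum Finset.univ
    (fun τ _ => (hterm τ).1)]
  have hval : ∀ (τ : Equiv.Perm (Fin n × Fin 2)) (p : Fin n × Fin n),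
      ∫ ω, X τ p ω ∂μ = mval μ₁ μ₂ (eDeg τ p.1 p.2) := by
    intro τ p
    by_cases h0 : eDeg τ p.1 p.2 = 0
    · have hXc : X τ p = fun _ => (2:ℝ) := by
        funext ω
        simp [hX, h0]
      rw [hXc, MeasureTheory.integral_const]
      simp [mval, h0]
    · by_cases h1 : eDeg τ p.1 p.2 = 1
      · have hXc : X τ p = a p.1 p.2 := by
          funext ω
          simp [hX, h0, h1, pow_one]
        rw [hXc, show mval μ₁ μ₂ (eDeg τ p.1 p.2) = μ₁ from by rw [h1]; norm_num [mval]]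
        exact hmean p.1 p.2
      · have h2 : eDeg τ p.1 p.2 = 2 := by
          have := hedle τ p
          omega
        have hXc : X τ p = fun ω => a p.1 p.2 ω ^ 2 := by
          funext ω
          simp [hX, h0, h2]
        rw [hXc, show mval μ₁ μ₂ (eDeg τ p.1 p.2) = μ₂ from by rw [h2]; norm_num [mval]]
        exact hsecond p.1 p.2
  have hsum : ∀ τ : Equiv.Perm (Fin n × Fin 2),
      ∫ ω, ∏ p : Fin n × Fin n, X τ p ω ∂μ
        = ∏ i, ∏ j, mval μ₁ μ₂ (eDeg τ i j) := by
    intro τ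
    rw [(hterm τ).2]
    rw [Finset.prod_congr rfl (fun p _ => hval τ p)]
    rw [Fintype.prod_prod_type (f := fun p : Fin n × Fin n => mval μ₁ μ₂ (eDeg τ p.1 p.2))]
  rw [Finset.sum_congr rfl (fun τ _ => hsum τ)]
  rw [master μ₁ μ₂]
  rw [Finset.mul_sum]
  rw [Finset.sum_congr rfl (fun y _ => per_pair_value y.1 y.2 μ₁ μ₂)]
  rw [Fintype.sum_prod_type (f := fun y : Equiv.Perm (Fin n) × Equiv.Perm (Fin n) =>
    μ₂ ^ fixCount (y.1⁻¹*y.2) * (μ₁^2) ^ (n - fixCount (y.1⁻¹*y.2))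
      * ((2:ℝ) ^ (y.1⁻¹*y.2).cycleType.card)⁻¹)]
  have hinner : ∀ σ₁ : Equiv.Perm (Fin n),
      (∑ σ₂ : Equiv.Perm (Fin n), μ₂ ^ fixCount (σ₁⁻¹*σ₂) * (μ₁^2) ^ (n - fixCount (σ₁⁻¹*σ₂))
        * ((2:ℝ) ^ (σ₁⁻¹*σ₂).cycleType.card)⁻¹)
      = ∑ σ : Equiv.Perm (Fin n), μ₂ ^ fixCount σ * (μ₁^2) ^ (n - fixCount σ)
          * ((2:ℝ) ^ σ.cycleType.card)⁻¹ := by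
    intro σ₁
    refine (Fintype.sum_equiv (Equiv.mulLeft σ₁)
      (fun σ => μ₂ ^ fixCount σ * (μ₁^2) ^ (n - fixCount σ)
        * ((2:ℝ) ^ σ.cycleType.card)⁻¹)
      (fun σ₂ => μ₂ ^ fixCount (σ₁⁻¹*σ₂) * (μ₁^2) ^ (n - fixCount (σ₁⁻¹*σ₂))
        * ((2:ℝ) ^ (σ₁⁻¹*σ₂).cycleType.card)⁻¹) ?_).symm
    intro σ
    simp [Equiv.mulLeft, inv_mul_cancel_left]
  rw [Finset.sum_congr rfl (fun σ₁ _ => hinner σ₁)]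
  rw [Finset.sum_const, Finset.card_univ, nsmul_eq_mul]
  congr 1
  rw [Fintype.card_perm, Fintype.card_fin]
end

section
/- Let θ₁, θ₂ > 0 be real numbers and θ₃ ∈ (0,1] with θ₁ ≥ θ₂·θ₃. For n ≥ 1 define Ψ_n(θ₁,θ₂,θ₃) := (n!)² · θ₂^n · Σ_{ℓ=0}^{n} [ Γ(n−ℓ+θ₃) / ( Γ(n−ℓ+1) · Γ(θ₃) ) ] · (θ₁/θ₂ − θ₃)^ℓ / ℓ!. Then Ψ_n(θ₁,θ₂,θ₃) ~ (n!)² · θ₂^n · n^{θ₃−1} / Γ(θ₃) · exp(θ₁/θ₂ − θ₃) as n → ∞; that is, the quotient of the two sides tends to 1. -/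
open Filter Real


open scoped BigOperators

/-- `Ψ_n(θ₁,θ₂,θ₃) = (n!)² · θ₂ⁿ · Σ_{ℓ=0}^{n} [Γ(n−ℓ+θ₃) / (Γ(n−ℓ+1)·Γ(θ₃))] ·
(θ₁/θ₂ − θ₃)^ℓ / ℓ!`. -/
noncomputable def Psi (θ₁ θ₂ θ₃ : ℝ) (n : ℕ) : ℝ :=
  (Nat.factorial n : ℝ) ^ 2 * θ₂ ^ n *
    ∑ ℓ ∈ Finset.range (n + 1),
      (Real.Gamma ((n : ℝ) - (ℓ : ℝ) + θ₃) /
          (Real.Gamma ((n : ℝ) - (ℓ : ℝ) + 1) * Real.Gamma θ₃)) *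
        (θ₁ / θ₂ - θ₃) ^ ℓ / (Nat.factorial ℓ : ℝ)

lemma gamma_conv (a b u v : ℝ) (hu : 0 < u) (hv : 0 < v) (ha : 0 ≤ a) (hb : 0 ≤ b)
    (hab : a + b = 1) : Real.Gamma (a * u + b * v) ≤ Real.Gamma u ^ a * Real.Gamma v ^ b := by
  have hpos : 0 < a * u + b * v := by
    rcases ha.lt_or_eq with h0 | h0
    · nlinarith [mul_nonneg hb hv.le]
    · have hb1 : b = 1 := by linarith
      rw [← h0, hb1]; simpa using hv
  have hcv := Real.convexOn_log_Gamma.2 (Set.mem_Ioi.mpr hu) (Set.mem_Ioi.mpr hv) ha hb hab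
  simp only [smul_eq_mul, Function.comp_apply] at hcv
  have hΓ : 0 < Real.Gamma (a * u + b * v) := Real.Gamma_pos_of_pos hpos
  have hΓu : 0 < Real.Gamma u := Real.Gamma_pos_of_pos hu
  have hΓv : 0 < Real.Gamma v := Real.Gamma_pos_of_pos hv
  calc Real.Gamma (a * u + b * v) = Real.exp (Real.log (Real.Gamma (a * u + b * v))) :=
        (Real.exp_log hΓ).symm
    _ ≤ Real.exp (a * Real.log (Real.Gamma u) + b * Real.log (Real.Gamma v)) :=
        Real.exp_le_exp.mpr hcv
    _ = Real.Gamma u ^ a * Real.Gamma v ^ b := by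
        rw [Real.exp_add, Real.rpow_def_of_pos hΓu, Real.rpow_def_of_pos hΓv,
          mul_comm a, mul_comm b]

lemma gautschi_upper {s : ℝ} (hs : 0 < s) (hs1 : s ≤ 1) {t : ℝ} (ht : 1 ≤ t) :
    Real.Gamma (t + s) ≤ Real.Gamma (t + 1) * t ^ (s - 1) := by
  have ht0 : 0 < t := lt_of_lt_of_le one_pos ht
  have key := gamma_conv (1 - s) s t (t + 1) ht0 (by linarith) (by linarith) hs.le (by ring)
  have h1 : (1 - s) * t + s * (t + 1) = t + s := by ring
  rw [h1] at key
  have hΓt1 : 0 < Real.Gamma (t + 1) := Real.Gamma_pos_of_pos (by linarith)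
  have hGadd : Real.Gamma (t + 1) = t * Real.Gamma t := Real.Gamma_add_one ht0.ne'
  have hΓt : 0 < Real.Gamma t := Real.Gamma_pos_of_pos ht0
  calc Real.Gamma (t + s) ≤ Real.Gamma t ^ (1 - s) * Real.Gamma (t + 1) ^ s := key
    _ = (Real.Gamma (t + 1) / t) ^ (1 - s) * Real.Gamma (t + 1) ^ s := by
        rw [hGadd, mul_div_cancel_left₀ _ ht0.ne']
    _ = Real.Gamma (t + 1) ^ (1 - s) * Real.Gamma (t + 1) ^ s * t ^ (s - 1) := by
        rw [Real.div_rpow hΓt1.le ht0.le, show s - 1 = -(1 - s) by ring,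
          Real.rpow_neg ht0.le, div_eq_mul_inv]
        ring
    _ = Real.Gamma (t + 1) * t ^ (s - 1) := by
        rw [← Real.rpow_add hΓt1]; norm_num

lemma gautschi_lower {s : ℝ} (hs : 0 < s) (hs1 : s ≤ 1) {t : ℝ} (ht : 0 < t) :
    Real.Gamma (t + 1) * (t + s) ^ (s - 1) ≤ Real.Gamma (t + s) := by
  have hts : 0 < t + s := by linarith
  have key := gamma_conv s (1 - s) (t + s) (t + 1 + s) hts (by linarith) hs.le (by linarith)
    (by ring)
  have h1 : s * (t + s) + (1 - s) * (t + 1 + s) = t + 1 := by ring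
  rw [h1] at key
  have hΓts : 0 < Real.Gamma (t + s) := Real.Gamma_pos_of_pos hts
  have hGadd : Real.Gamma (t + 1 + s) = (t + s) * Real.Gamma (t + s) := by
    rw [show t + 1 + s = (t + s) + 1 by ring]
    exact Real.Gamma_add_one hts.ne'
  have key2 : Real.Gamma (t + 1) ≤ Real.Gamma (t + s) * (t + s) ^ (1 - s) := by
    calc Real.Gamma (t + 1) ≤ Real.Gamma (t + s) ^ s * Real.Gamma (t + 1 + s) ^ (1 - s) := key
      _ = Real.Gamma (t + s) ^ s * ((t + s) ^ (1 - s) * Real.Gamma (t + s) ^ (1 - s)) := by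
          rw [hGadd, Real.mul_rpow hts.le hΓts.le]
      _ = Real.Gamma (t + s) ^ s * Real.Gamma (t + s) ^ (1 - s) * (t + s) ^ (1 - s) := by ring
      _ = Real.Gamma (t + s) * (t + s) ^ (1 - s) := by
          rw [← Real.rpow_add hΓts]; norm_num
  have hp : 0 < (t + s) ^ (1 - s) := Real.rpow_pos_of_pos hts _
  have h2 : (t + s) ^ (s - 1) = ((t + s) ^ (1 - s))⁻¹ := by
    rw [show s - 1 = -(1 - s) by ring, Real.rpow_neg hts.le]
  rw [h2, mul_inv_le_iff₀ hp]
  exact key2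

/-- The normalized summand. -/
noncomputable def Faux (s x : ℝ) (n ℓ : ℕ) : ℝ :=
  if ℓ ≤ n then
    Real.Gamma (((n - ℓ : ℕ) : ℝ) + s) / Real.Gamma (((n - ℓ : ℕ) : ℝ) + 1) * x ^ ℓ /
        (Nat.factorial ℓ : ℝ) / (n : ℝ) ^ (s - 1)
  else 0

lemma aux_tendsto_ratio (c : ℝ) :
    Tendsto (fun n : ℕ => ((n : ℝ) + c) / n) atTop (nhds 1) := by
  have h : Tendsto (fun n : ℕ => 1 + c / n) atTop (nhds (1 + 0)) :=
    tendsto_const_nhds.add (tendsto_const_div_atTop_nhds_zero_nat c)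
  rw [add_zero] at h
  refine h.congr' ?_
  filter_upwards [eventually_ge_atTop 1] with n hn
  have hn0 : (n : ℝ) ≠ 0 := Nat.cast_ne_zero.mpr (by omega)
  field_simp

lemma aux_tendsto_rpow (c p : ℝ) :
    Tendsto (fun n : ℕ => (((n : ℝ) + c) / n) ^ p) atTop (nhds 1) := by
  have hcont := (Real.continuousAt_rpow_const 1 p (Or.inl one_ne_zero)).tendsto
  have h := hcont.comp (aux_tendsto_ratio c)
  simpa [Function.comp_def, Real.one_rpow] using h

lemma Faux_tendsto {s x : ℝ} (hs : 0 < s) (hs1 : s ≤ 1) (hx : 0 ≤ x) (ℓ : ℕ) :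
    Tendsto (fun n : ℕ => Faux s x n ℓ) atTop
      (nhds (x ^ ℓ / (Nat.factorial ℓ : ℝ))) := by
  have hL : Tendsto (fun n : ℕ => (((n : ℝ) + (s - ℓ)) / n) ^ (s - 1) *
      (x ^ ℓ / (Nat.factorial ℓ : ℝ))) atTop (nhds (x ^ ℓ / (Nat.factorial ℓ : ℝ))) := by
    simpa using (aux_tendsto_rpow (s - ℓ) (s - 1)).mul_const (x ^ ℓ / (Nat.factorial ℓ : ℝ))
  have hU : Tendsto (fun n : ℕ => (((n : ℝ) + (-(ℓ : ℝ))) / n) ^ (s - 1) *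
      (x ^ ℓ / (Nat.factorial ℓ : ℝ))) atTop (nhds (x ^ ℓ / (Nat.factorial ℓ : ℝ))) := by
    simpa using (aux_tendsto_rpow (-(ℓ : ℝ)) (s - 1)).mul_const (x ^ ℓ / (Nat.factorial ℓ : ℝ))
  refine tendsto_of_tendsto_of_tendsto_of_le_of_le' hL hU ?_ ?_ <;>
    · filter_upwards [eventually_ge_atTop (ℓ + 1)] with n hn
      have hℓn : ℓ ≤ n := by omega
      have hm : ((n - ℓ : ℕ) : ℝ) = (n : ℝ) - ℓ := by
        push_cast [Nat.cast_sub hℓn]; ring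
      have hcast : (ℓ : ℝ) + 1 ≤ (n : ℝ) := by exact_mod_cast hn
      have hn0 : (0 : ℝ) < n := by linarith [(Nat.cast_nonneg ℓ : (0:ℝ) ≤ ℓ)]
      have ht0 : (0 : ℝ) < ((n - ℓ : ℕ) : ℝ) := by rw [hm]; linarith
      have ht1 : (1 : ℝ) ≤ ((n - ℓ : ℕ) : ℝ) := by rw [hm]; linarith
      have hΓ1 : 0 < Real.Gamma (((n - ℓ : ℕ) : ℝ) + 1) := Real.Gamma_pos_of_pos (by linarith)
      have hnp : (0 : ℝ) < (n : ℝ) ^ (s - 1) := Real.rpow_pos_of_pos hn0 _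
      have hxl : (0 : ℝ) ≤ x ^ ℓ / (Nat.factorial ℓ : ℝ) := by positivity
      simp only [Faux, if_pos hℓn]
      · first
        | · -- lower bound
            have h1 : (((n - ℓ : ℕ) : ℝ) + s) ^ (s - 1) ≤
                Real.Gamma (((n - ℓ : ℕ) : ℝ) + s) / Real.Gamma (((n - ℓ : ℕ) : ℝ) + 1) := by
              rw [le_div_iff₀ hΓ1, mul_comm]
              exact gautschi_lower hs hs1 ht0
            have hbase : (n : ℝ) + (s - ℓ) = ((n - ℓ : ℕ) : ℝ) + s := by rw [hm]; ring
            calc (((n : ℝ) + (s - ℓ)) / n) ^ (s - 1) * (x ^ ℓ / (Nat.factorial ℓ : ℝ))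
                = ((((n - ℓ : ℕ) : ℝ) + s) ^ (s - 1) / (n : ℝ) ^ (s - 1)) *
                  (x ^ ℓ / (Nat.factorial ℓ : ℝ)) := by
                  rw [hbase, Real.div_rpow (by linarith) hn0.le]
              _ ≤ (Real.Gamma (((n - ℓ : ℕ) : ℝ) + s) / Real.Gamma (((n - ℓ : ℕ) : ℝ) + 1) /
                  (n : ℝ) ^ (s - 1)) * (x ^ ℓ / (Nat.factorial ℓ : ℝ)) := by
                  apply mul_le_mul_of_nonneg_right _ hxl
                  exact (div_le_div_iff_of_pos_right hnp).mpr h1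
              _ = Real.Gamma (((n - ℓ : ℕ) : ℝ) + s) / Real.Gamma (((n - ℓ : ℕ) : ℝ) + 1) *
                  x ^ ℓ / (Nat.factorial ℓ : ℝ) / (n : ℝ) ^ (s - 1) := by ring
        | · -- upper bound
            have h1 : Real.Gamma (((n - ℓ : ℕ) : ℝ) + s) / Real.Gamma (((n - ℓ : ℕ) : ℝ) + 1) ≤
                ((n - ℓ : ℕ) : ℝ) ^ (s - 1) := by
              rw [div_le_iff₀ hΓ1, mul_comm]
              exact gautschi_upper hs hs1 ht1
            have hbase : (n : ℝ) + (-(ℓ : ℝ)) = ((n - ℓ : ℕ) : ℝ) := by rw [hm]; ring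
            calc Real.Gamma (((n - ℓ : ℕ) : ℝ) + s) / Real.Gamma (((n - ℓ : ℕ) : ℝ) + 1) *
                x ^ ℓ / (Nat.factorial ℓ : ℝ) / (n : ℝ) ^ (s - 1)
                = (Real.Gamma (((n - ℓ : ℕ) : ℝ) + s) / Real.Gamma (((n - ℓ : ℕ) : ℝ) + 1) /
                  (n : ℝ) ^ (s - 1)) * (x ^ ℓ / (Nat.factorial ℓ : ℝ)) := by ring
              _ ≤ (((n - ℓ : ℕ) : ℝ) ^ (s - 1) / (n : ℝ) ^ (s - 1)) *
                  (x ^ ℓ / (Nat.factorial ℓ : ℝ)) := by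
                  apply mul_le_mul_of_nonneg_right _ hxl
                  exact (div_le_div_iff_of_pos_right hnp).mpr h1
              _ = (((n : ℝ) + (-(ℓ : ℝ))) / n) ^ (s - 1) * (x ^ ℓ / (Nat.factorial ℓ : ℝ)) := by
                  rw [hbase, Real.div_rpow ht0.le hn0.le]

lemma Faux_nonneg {s x : ℝ} (hs : 0 < s) (hx : 0 ≤ x) (n ℓ : ℕ) : 0 ≤ Faux s x n ℓ := by
  unfold Faux
  split
  · rename_i hℓn
    have h1 : 0 < Real.Gamma (((n - ℓ : ℕ) : ℝ) + s) :=
      Real.Gamma_pos_of_pos (by positivity)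
    have h2 : 0 < Real.Gamma (((n - ℓ : ℕ) : ℝ) + 1) :=
      Real.Gamma_pos_of_pos (by positivity)
    have h3 : (0 : ℝ) ≤ (n : ℝ) ^ (s - 1) := Real.rpow_nonneg (Nat.cast_nonneg n) _
    positivity
  · exact le_rfl

lemma Faux_bound {s x : ℝ} (hs : 0 < s) (hs1 : s ≤ 1) (hx : 0 ≤ x) {n : ℕ} (hn : 1 ≤ n)
    (ℓ : ℕ) : ‖Faux s x n ℓ‖ ≤
      (1 + Real.Gamma s) * (((ℓ : ℝ) + 1) * x ^ ℓ / (Nat.factorial ℓ : ℝ)) := by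
  have hΓs : 0 < Real.Gamma s := Real.Gamma_pos_of_pos hs
  rw [Real.norm_eq_abs, abs_of_nonneg (Faux_nonneg hs hx n ℓ)]
  rcases lt_or_ge n ℓ with hc | hℓn
  · rw [Faux, if_neg (by omega)]
    positivity
  · have hn0 : (0 : ℝ) < n := by exact_mod_cast hn
    have hnp : (0 : ℝ) < (n : ℝ) ^ (s - 1) := Real.rpow_pos_of_pos hn0 _
    rw [Faux, if_pos hℓn]
    rcases eq_or_lt_of_le hℓn with rfl | hlt
    · -- ℓ = n
      have hcast1 : (1 : ℝ) ≤ (ℓ : ℝ) := by exact_mod_cast hn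
      simp only [Nat.sub_self, Nat.cast_zero, zero_add, Real.Gamma_one, div_one]
      have hinv : (((ℓ : ℝ)) ^ (s - 1))⁻¹ = (ℓ : ℝ) ^ (1 - s) := by
        rw [show (1 : ℝ) - s = -(s - 1) by ring, Real.rpow_neg (Nat.cast_nonneg ℓ)]
      have hstep : (ℓ : ℝ) ^ (1 - s) ≤ (ℓ : ℝ) + 1 := by
        calc (ℓ : ℝ) ^ (1 - s) ≤ (ℓ : ℝ) ^ (1 : ℝ) :=
              Real.rpow_le_rpow_of_exponent_le hcast1 (by linarith)
          _ = (ℓ : ℝ) := Real.rpow_one _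
          _ ≤ (ℓ : ℝ) + 1 := by linarith
      have hxl : (0 : ℝ) ≤ x ^ ℓ / (Nat.factorial ℓ : ℝ) := by positivity
      calc Real.Gamma s * x ^ ℓ / (Nat.factorial ℓ : ℝ) / (ℓ : ℝ) ^ (s - 1)
          = Real.Gamma s * (x ^ ℓ / (Nat.factorial ℓ : ℝ)) * (((ℓ : ℝ)) ^ (s - 1))⁻¹ := by
            ring
        _ = Real.Gamma s * (x ^ ℓ / (Nat.factorial ℓ : ℝ)) * (ℓ : ℝ) ^ (1 - s) := by
            rw [hinv]
        _ ≤ (1 + Real.Gamma s) * (x ^ ℓ / (Nat.factorial ℓ : ℝ)) * ((ℓ : ℝ) + 1) := by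
            apply mul_le_mul _ hstep (Real.rpow_nonneg (Nat.cast_nonneg ℓ) _) (by positivity)
            exact mul_le_mul_of_nonneg_right (by linarith) hxl
        _ = (1 + Real.Gamma s) * (((ℓ : ℝ) + 1) * x ^ ℓ / (Nat.factorial ℓ : ℝ)) := by ring
    · -- ℓ < n
      have hℓ1n : ℓ + 1 ≤ n := hlt
      have hm : ((n - ℓ : ℕ) : ℝ) = (n : ℝ) - ℓ := by push_cast [Nat.cast_sub hℓn]; ring
      have hcast : (ℓ : ℝ) + 1 ≤ (n : ℝ) := by exact_mod_cast hℓ1n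
      have hℓ0 : (0 : ℝ) ≤ (ℓ : ℝ) := Nat.cast_nonneg ℓ
      have ht0 : (0 : ℝ) < ((n - ℓ : ℕ) : ℝ) := by rw [hm]; linarith
      have ht1 : (1 : ℝ) ≤ ((n - ℓ : ℕ) : ℝ) := by rw [hm]; linarith
      have hΓ1 : 0 < Real.Gamma (((n - ℓ : ℕ) : ℝ) + 1) := Real.Gamma_pos_of_pos (by linarith)
      have h1 : Real.Gamma (((n - ℓ : ℕ) : ℝ) + s) / Real.Gamma (((n - ℓ : ℕ) : ℝ) + 1) ≤
          ((n - ℓ : ℕ) : ℝ) ^ (s - 1) := by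
        rw [div_le_iff₀ hΓ1, mul_comm]
        exact gautschi_upper hs hs1 ht1
      have hratio : ((n - ℓ : ℕ) : ℝ) ^ (s - 1) / (n : ℝ) ^ (s - 1) ≤ (ℓ : ℝ) + 1 := by
        have e1 : ((n - ℓ : ℕ) : ℝ) ^ (s - 1) = (((n - ℓ : ℕ) : ℝ) ^ (1 - s))⁻¹ := by
          rw [show s - 1 = -(1 - s) by ring, Real.rpow_neg ht0.le]
        have e2 : ((n : ℝ)) ^ (s - 1) = (((n : ℝ)) ^ (1 - s))⁻¹ := by
          rw [show s - 1 = -(1 - s) by ring, Real.rpow_neg hn0.le]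
        have hq1 : (1 : ℝ) ≤ (n : ℝ) / ((n - ℓ : ℕ) : ℝ) := by
          rw [le_div_iff₀ ht0, one_mul, hm]; linarith
        calc ((n - ℓ : ℕ) : ℝ) ^ (s - 1) / (n : ℝ) ^ (s - 1)
            = ((n : ℝ)) ^ (1 - s) / (((n - ℓ : ℕ) : ℝ)) ^ (1 - s) := by
              rw [e1, e2, inv_div_inv]
          _ = ((n : ℝ) / ((n - ℓ : ℕ) : ℝ)) ^ (1 - s) := by
              rw [Real.div_rpow hn0.le ht0.le]
          _ ≤ ((n : ℝ) / ((n - ℓ : ℕ) : ℝ)) ^ (1 : ℝ) :=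
              Real.rpow_le_rpow_of_exponent_le hq1 (by linarith)
          _ = (n : ℝ) / ((n - ℓ : ℕ) : ℝ) := Real.rpow_one _
          _ ≤ (ℓ : ℝ) + 1 := by
              rw [div_le_iff₀ ht0, hm]
              nlinarith [mul_nonneg hℓ0 (by linarith : (0 : ℝ) ≤ (n : ℝ) - ℓ - 1)]
      calc Real.Gamma (((n - ℓ : ℕ) : ℝ) + s) / Real.Gamma (((n - ℓ : ℕ) : ℝ) + 1) *
            x ^ ℓ / (Nat.factorial ℓ : ℝ) / (n : ℝ) ^ (s - 1)
          = (Real.Gamma (((n - ℓ : ℕ) : ℝ) + s) / Real.Gamma (((n - ℓ : ℕ) : ℝ) + 1) /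
              (n : ℝ) ^ (s - 1)) * (x ^ ℓ / (Nat.factorial ℓ : ℝ)) := by ring
        _ ≤ (((n - ℓ : ℕ) : ℝ) ^ (s - 1) / (n : ℝ) ^ (s - 1)) *
              (x ^ ℓ / (Nat.factorial ℓ : ℝ)) := by
            apply mul_le_mul_of_nonneg_right _ (by positivity)
            exact (div_le_div_iff_of_pos_right hnp).mpr h1
        _ ≤ ((ℓ : ℝ) + 1) * (x ^ ℓ / (Nat.factorial ℓ : ℝ)) :=
            mul_le_mul_of_nonneg_right hratio (by positivity)
        _ ≤ (1 + Real.Gamma s) * (((ℓ : ℝ) + 1) * x ^ ℓ / (Nat.factorial ℓ : ℝ)) := by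
            have h2 : ((ℓ : ℝ) + 1) * (x ^ ℓ / (Nat.factorial ℓ : ℝ)) =
                1 * (((ℓ : ℝ) + 1) * x ^ ℓ / (Nat.factorial ℓ : ℝ)) := by ring
            rw [h2]
            apply mul_le_mul_of_nonneg_right (by linarith) (by positivity)

lemma g_summable {s x : ℝ} (hs : 0 < s) (hx : 0 ≤ x) :
    Summable (fun ℓ : ℕ =>
      (1 + Real.Gamma s) * (((ℓ : ℝ) + 1) * x ^ ℓ / (Nat.factorial ℓ : ℝ))) := by
  apply Summable.mul_left
  apply Summable.of_nonneg_of_le (fun ℓ => by positivity) (fun ℓ => ?_)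
    (Real.summable_pow_div_factorial (2 * x))
  have h2 : ((ℓ : ℝ) + 1) ≤ (2 : ℝ) ^ ℓ := by
    exact_mod_cast Nat.succ_le_of_lt (Nat.lt_two_pow_self (n := ℓ))
  have h3 : ((ℓ : ℝ) + 1) * x ^ ℓ ≤ (2 : ℝ) ^ ℓ * x ^ ℓ :=
    mul_le_mul_of_nonneg_right h2 (pow_nonneg hx ℓ)
  calc ((ℓ : ℝ) + 1) * x ^ ℓ / (Nat.factorial ℓ : ℝ)
      ≤ (2 : ℝ) ^ ℓ * x ^ ℓ / (Nat.factorial ℓ : ℝ) :=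
        (div_le_div_iff_of_pos_right (by exact_mod_cast ℓ.factorial_pos)).mpr h3
    _ = (2 * x) ^ ℓ / (Nat.factorial ℓ : ℝ) := by rw [mul_pow]

/-- for `θ₁, θ₂ > 0`, `θ₃ ∈ (0,1]` with `θ₁ ≥ θ₂·θ₃`,
`Ψ_n(θ₁,θ₂,θ₃) ~ (n!)² · θ₂ⁿ · n^{θ₃−1} / Γ(θ₃) · exp(θ₁/θ₂ − θ₃)` as `n → ∞`. -/
theorem Psi_asymptotics (θ₁ θ₂ θ₃ : ℝ) (h₁ : 0 < θ₁) (h₂ : 0 < θ₂)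
    (h₃ : θ₃ ∈ Set.Ioc (0 : ℝ) 1) (h : θ₂ * θ₃ ≤ θ₁) :
    Filter.Tendsto
      (fun n : ℕ =>
        Psi θ₁ θ₂ θ₃ n /
          ((Nat.factorial n : ℝ) ^ 2 * θ₂ ^ n * (n : ℝ) ^ (θ₃ - 1) / Real.Gamma θ₃ *
            Real.exp (θ₁ / θ₂ - θ₃)))
      Filter.atTop (nhds 1) := by
  obtain ⟨hs, hs1⟩ := h₃
  set x : ℝ := θ₁ / θ₂ - θ₃ with hxdef
  have hx : 0 ≤ x := by
    have hle : θ₃ ≤ θ₁ / θ₂ := (le_div_iff₀ h₂).mpr (by linarith [mul_comm θ₂ θ₃])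
    simp only [hxdef]; linarith
  have hΓs : 0 < Real.Gamma θ₃ := Real.Gamma_pos_of_pos hs
  have hexp : (∑' ℓ : ℕ, x ^ ℓ / (Nat.factorial ℓ : ℝ)) = Real.exp x := by
    rw [Real.exp_eq_exp_ℝ, NormedSpace.exp_eq_tsum_div]
  have htsum : Tendsto (fun n : ℕ => ∑' ℓ : ℕ, Faux θ₃ x n ℓ) atTop (nhds (Real.exp x)) := by
    have hT := tendsto_tsum_of_dominated_convergence (g_summable hs hx)
      (fun ℓ => Faux_tendsto hs hs1 hx ℓ)
      (by filter_upwards [eventually_ge_atTop 1] with n hn ℓ; exact Faux_bound hs hs1 hx hn ℓ)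
    rwa [hexp] at hT
  have hmain : Tendsto (fun n : ℕ => (∑' ℓ : ℕ, Faux θ₃ x n ℓ) / Real.exp x) atTop (nhds 1) := by
    have hT := htsum.div_const (Real.exp x)
    rwa [div_self (Real.exp_ne_zero x)] at hT
  refine hmain.congr' ?_
  filter_upwards [eventually_ge_atTop 1] with n hn
  have hn0 : (0 : ℝ) < n := by exact_mod_cast hn
  have hnp : (0 : ℝ) < (n : ℝ) ^ (θ₃ - 1) := Real.rpow_pos_of_pos hn0 _
  have hfac : (0 : ℝ) < (Nat.factorial n : ℝ) := by exact_mod_cast n.factorial_pos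
  have hts : (∑' ℓ : ℕ, Faux θ₃ x n ℓ) = ∑ ℓ ∈ Finset.range (n + 1), Faux θ₃ x n ℓ := by
    apply tsum_eq_sum
    intro ℓ hℓ
    have hno : ¬ℓ ≤ n := by
      simpa [Finset.mem_range, Nat.lt_succ_iff] using hℓ
    simp [Faux, hno]
  have hsum_eq : ∑ ℓ ∈ Finset.range (n + 1), Faux θ₃ x n ℓ =
      (∑ ℓ ∈ Finset.range (n + 1),
        (Real.Gamma ((n : ℝ) - (ℓ : ℝ) + θ₃) /
          (Real.Gamma ((n : ℝ) - (ℓ : ℝ) + 1) * Real.Gamma θ₃)) *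
          x ^ ℓ / (Nat.factorial ℓ : ℝ)) * Real.Gamma θ₃ / (n : ℝ) ^ (θ₃ - 1) := by
    rw [Finset.sum_mul, Finset.sum_div]
    refine Finset.sum_congr rfl fun ℓ hℓ => ?_
    have hℓn : ℓ ≤ n := Nat.lt_succ_iff.mp (Finset.mem_range.mp hℓ)
    have hm : ((n - ℓ : ℕ) : ℝ) = (n : ℝ) - ℓ := by push_cast [Nat.cast_sub hℓn]; ring
    have hℓ0 : (0 : ℝ) ≤ (ℓ : ℝ) := Nat.cast_nonneg ℓ
    have hcast : (ℓ : ℝ) ≤ (n : ℝ) := by exact_mod_cast hℓn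
    have hΓ1 : Real.Gamma ((n : ℝ) - ℓ + 1) ≠ 0 :=
      (Real.Gamma_pos_of_pos (by linarith)).ne'
    have hfacℓ : (Nat.factorial ℓ : ℝ) ≠ 0 := by exact_mod_cast ℓ.factorial_pos.ne'
    simp only [Faux, if_pos hℓn, hm]
    field_simp
  rw [hts, hsum_eq, Psi, ← hxdef]
  have hθ2 : θ₂ ^ n ≠ 0 := (pow_pos h₂ n).ne'
  set T : ℝ := ∑ ℓ ∈ Finset.range (n + 1),
    (Real.Gamma ((n : ℝ) - (ℓ : ℝ) + θ₃) /
      (Real.Gamma ((n : ℝ) - (ℓ : ℝ) + 1) * Real.Gamma θ₃)) *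
      x ^ ℓ / (Nat.factorial ℓ : ℝ) with hT
  field_simp
end
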